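/- arXiv:1601.04268 — 7 statements merged into one kernel-verified Lean document; each statement's English description precedes it below -/
import Mathlib

section
/- Let M be an element of the symplectic group Ω₂ = Sp(4,ℝ). Then M<Z> = Z for every Z ∈ Ĥ₂ if and only if M = I, M = −I, M = Q, or M = −Q. -/
open Matrix Complex

noncomputable section

abbrev Mat2 : Type := Matrix (Fin 2) (Fin 2) ℂ
abbrev Mat2R : Type := Matrix (Fin 2) (Fin 2) ℝ
abbrev Mat4 : Type := Matrix (Fin 2 ⊕ Fin 2) (Fin 2 ⊕ Fin 2) ℝ

/-- `q = [[0,1],[1,0]]`. -/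
def qR : Mat2R := !![0, 1; 1, 0]

/-- `J = [[0, I₂],[−I₂, 0]]` (4×4). -/
def Jmat : Mat4 := Matrix.fromBlocks 0 1 (-1) 0

/-- `Q = diag(q, q)` (4×4). -/
def Qmat : Mat4 := Matrix.fromBlocks qR 0 0 qR

/-- `Ω₂ = Sp(4,ℝ) = {M : ᵗM J M = J}`. -/
def Omega2 : Set Mat4 := {M | Mᵀ * Jmat * M = Jmat}

/-- The new Siegel upper half space `Ĥ₂`: bi-symmetric `Z = [[τ,z],[z,τ]]` with `Im τ > |Im z|`. -/
def Hhat : Set Mat2 :=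
  {Z | Z 1 1 = Z 0 0 ∧ Z 1 0 = Z 0 1 ∧ |(Z 0 1).im| < (Z 0 0).im}

/-- The action `M<Z> = (AZ+B)(CZ+D)⁻¹` of a real 4×4 matrix in 2×2 blocks on `Z ∈ ℂ^{2×2}`. -/
def act (M : Mat4) (Z : Mat2) : Mat2 :=
  (M.toBlocks₁₁.map Complex.ofReal * Z + M.toBlocks₁₂.map Complex.ofReal) *
    (M.toBlocks₂₁.map Complex.ofReal * Z + M.toBlocks₂₂.map Complex.ofReal)⁻¹

/-- `Ω̂₂ = {M ∈ Ω₂ : M<Z> ∈ Ĥ₂ for all Z ∈ Ĥ₂}`. -/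
def OmegaHat : Set Mat4 := {M | M ∈ Omega2 ∧ ∀ Z ∈ Hhat, act M Z ∈ Hhat}

/-!
Write `M = [[A, B], [C, D]]`. If `M` fixes `Z`, then `AZ + B = Z(CZ + D)`, because `Z ≠ 0`
rules out the junk value `0` of a singular inverse. At the scalar points `Z = t i I` this reads
`t i A + B = -t² C + t i D` entrywise, so `B = C = 0` and `A = D`; at `Z = i I + q` it says that
`A` commutes with `q`, i.e. `A = [[a, b], [b, a]]`. The symplectic condition for `diag(A, A)` is
`ᵗA A = I`, i.e. `a² + b² = 1` and `ab = 0`, leaving `A = ±I, ±q`. Conversely such an `A` is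
orthogonal and commutes with every `[[τ, z], [z, τ]]`, so `M<Z> = A Z A⁻¹ = Z`.
-/

lemma Matrix.eq_mul_of_mul_nonsing_inv_eq {n R : Type*} [Fintype n] [DecidableEq n] [CommRing R]
    {X Y Z : Matrix n n R} (hZ : Z ≠ 0) (h : X * Y⁻¹ = Z) : X = Z * Y := by
  by_cases hY : IsUnit Y.det
  · rw [← h, nonsing_inv_mul_cancel_right _ _ hY]
  · rw [nonsing_inv_apply_not_isUnit _ hY, mul_zero] at h
    exact absurd h.symm hZ

lemma act_fromBlocks (A B C D : Mat2R) (Z : Mat2) :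
    act (fromBlocks A B C D) Z =
      (A.map ofReal * Z + B.map ofReal) * (C.map ofReal * Z + D.map ofReal)⁻¹ := by
  simp only [act, toBlocks_fromBlocks₁₁, toBlocks_fromBlocks₁₂, toBlocks_fromBlocks₂₁,
    toBlocks_fromBlocks₂₂]

lemma map_ofReal_mul (A B : Mat2R) : (A * B).map ofReal = A.map ofReal * B.map ofReal :=
  Matrix.map_mul (f := ofRealHom)

lemma act_fromBlocks_diagonal (A : Mat2R) (Z : Mat2) :
    act (fromBlocks A 0 0 A) Z = A.map ofReal * Z * (A.map ofReal)⁻¹ := by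
  simp [act_fromBlocks, Matrix.map_zero _ ofReal_zero]

lemma qR_transpose_mul_self : qRᵀ * qR = 1 := by
  ext i j; fin_cases i <;> fin_cases j <;> simp [qR, mul_apply, Fin.sum_univ_two]

lemma fromBlocks_diagonal_neg (A : Mat2R) : fromBlocks (-A) 0 0 (-A) = -fromBlocks A 0 0 A := by
  rw [fromBlocks_neg, neg_zero]

lemma smul_one_mem_Hhat {t : ℝ} (ht : 0 < t) : ((t : ℂ) * I) • (1 : Mat2) ∈ Hhat :=
  ⟨by simp, by simp, by simpa using ht⟩

lemma I_smul_one_add_qR_mem_Hhat : I • (1 : Mat2) + qR.map ofReal ∈ Hhat :=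
  ⟨by simp [qR], by simp [qR], by simp [qR]⟩

lemma eq_smul_one_add_smul_qR_of_mem_Hhat {Z : Mat2} (hZ : Z ∈ Hhat) :
    Z = Z 0 0 • (1 : Mat2) + Z 0 1 • qR.map ofReal := by
  obtain ⟨h11, h10, -⟩ := hZ
  ext i j; fin_cases i <;> fin_cases j <;> simp [qR, h11, h10]

lemma fromBlocks_mem_Omega2_iff (A D : Mat2R) : fromBlocks A 0 0 D ∈ Omega2 ↔ Aᵀ * D = 1 := by
  have hJ : (fromBlocks A 0 0 D)ᵀ * Jmat * fromBlocks A 0 0 D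
      = fromBlocks 0 (Aᵀ * D) (-(Dᵀ * A)) 0 := by
    simp [Jmat, fromBlocks_transpose, fromBlocks_multiply]
  change _ = Jmat ↔ _
  rw [hJ, Jmat, fromBlocks_inj]
  constructor
  · exact fun h => h.2.1
  · intro h
    refine ⟨rfl, h, ?_, rfl⟩
    rw [← transpose_transpose (Dᵀ * A), transpose_mul, transpose_transpose, h, transpose_one]

lemma eq_fromBlocks_of_act_smul_one_eq {M : Mat4}
    (h : ∀ t : ℝ, 0 < t → act M (((t : ℂ) * I) • 1) = ((t : ℂ) * I) • 1) :
    M = fromBlocks M.toBlocks₁₁ 0 0 M.toBlocks₁₁ := by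
  have hentry : ∀ t : ℝ, 0 < t → ∀ i j,
      (t * I) * M.toBlocks₁₁ i j + M.toBlocks₁₂ i j
        = (t * I) * ((t * I) * M.toBlocks₂₁ i j + M.toBlocks₂₂ i j) := by
    intro t ht i j
    have hne : ((t : ℂ) * I) • (1 : Mat2) ≠ 0 := by
      simpa [smul_eq_zero] using ht.ne'
    simpa [mul_comm] using congrFun (congrFun (eq_mul_of_mul_nonsing_inv_eq hne (h t ht)) i) j
  have hre : ∀ t : ℝ, 0 < t → ∀ i j, M.toBlocks₁₂ i j = -(t * (t * M.toBlocks₂₁ i j)) := by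
    intro t ht i j
    simpa [mul_assoc] using congrArg re (hentry t ht i j)
  have hB : M.toBlocks₁₂ = 0 := by
    ext i j
    rw [Matrix.zero_apply]
    linear_combination (4 * hre 1 one_pos i j - hre 2 two_pos i j) / 3
  have hC : M.toBlocks₂₁ = 0 := by
    ext i j
    rw [Matrix.zero_apply]
    linear_combination (hre 2 two_pos i j - hre 1 one_pos i j) / 3
  have hD : M.toBlocks₂₂ = M.toBlocks₁₁ := by
    ext i j
    simpa using (congrArg im (hentry 1 one_pos i j)).symm
  rw [← fromBlocks_toBlocks M, ← hD, hB, hC]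
  simp

lemma commute_qR_of_act_eq {A : Mat2R}
    (h : act (fromBlocks A 0 0 A) (I • 1 + qR.map ofReal) = I • 1 + qR.map ofReal) :
    Commute A qR := by
  have hne : I • (1 : Mat2) + qR.map ofReal ≠ 0 := fun h0 => by
    simpa [qR] using congrFun (congrFun h0 0) 0
  rw [act_fromBlocks_diagonal] at h
  have hc := eq_mul_of_mul_nonsing_inv_eq hne h
  simp only [mul_add, add_mul, mul_smul_comm, smul_mul_assoc, mul_one, one_mul, add_right_inj,
    ← map_ofReal_mul] at hc
  exact map_injective ofReal_injective hc

lemma eq_one_or_of_commute_qR {A : Mat2R} (hq : Commute A qR) (hA : Aᵀ * A = 1) :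
    A = 1 ∨ A = -1 ∨ A = qR ∨ A = -qR := by
  obtain ⟨a, b, rfl⟩ : ∃ a b : ℝ, A = !![a, b; b, a] := by
    have h10 : A 1 0 = A 0 1 := by
      simpa [qR, mul_apply] using (congrFun (congrFun hq.eq 0) 0).symm
    have h11 : A 1 1 = A 0 0 := by
      simpa [qR, mul_apply] using (congrFun (congrFun hq.eq 0) 1).symm
    refine ⟨A 0 0, A 0 1, ?_⟩
    conv_lhs => rw [eta_fin_two A]
    rw [h10, h11]
  have hnorm : a * a + b * b = 1 := by
    simpa [mul_apply, Fin.sum_univ_two] using congrFun (congrFun hA 0) 0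
  have hprod : a * b = 0 := by
    have h01 : a * b + b * a = 0 := by
      simpa [mul_apply, Fin.sum_univ_two] using congrFun (congrFun hA 0) 1
    linear_combination h01 / 2
  rcases mul_eq_zero.mp hprod with rfl | rfl
  · rcases mul_self_eq_one_iff.mp (by simpa using hnorm) with rfl | rfl
    · exact Or.inr (Or.inr (Or.inl rfl))
    · exact Or.inr (Or.inr (Or.inr (by simp [qR])))
  · rcases mul_self_eq_one_iff.mp (by simpa using hnorm) with rfl | rfl
    · exact Or.inl (by simp [one_fin_two])
    · exact Or.inr (Or.inl (by simp [one_fin_two]))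

lemma commute_map_ofReal_of_mem_Hhat {A : Mat2R} (hq : Commute A qR) {Z : Mat2} (hZ : Z ∈ Hhat) :
    Commute (A.map ofReal) Z := by
  rw [eq_smul_one_add_smul_qR_of_mem_Hhat hZ]
  exact ((Commute.one_right _).smul_right _).add_right ((hq.map ofRealHom.mapMatrix).smul_right _)

lemma act_fromBlocks_diagonal_eq_self {A : Mat2R} (hq : Commute A qR) (hA : Aᵀ * A = 1)
    {Z : Mat2} (hZ : Z ∈ Hhat) : act (fromBlocks A 0 0 A) Z = Z := by
  have hA' : (A.map ofReal)ᵀ * A.map ofReal = 1 := by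
    rw [← transpose_map, ← map_ofReal_mul, hA, Matrix.map_one _ ofReal_zero ofReal_one]
  rw [act_fromBlocks_diagonal, (commute_map_ofReal_of_mem_Hhat hq hZ).eq, inv_eq_left_inv hA',
    mul_assoc, mul_eq_one_comm.mp hA', mul_one]

/-- For `M ∈ Ω₂`, `M<Z> = Z` for every `Z ∈ Ĥ₂` iff `M = ±I` or `M = ±Q`. -/
theorem stmt_0 (M : Mat4) (hM : M ∈ Omega2) :
    (∀ Z ∈ Hhat, act M Z = Z) ↔ (M = 1 ∨ M = -1 ∨ M = Qmat ∨ M = -Qmat) := by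
  constructor
  · intro h
    have hMA := eq_fromBlocks_of_act_smul_one_eq fun t ht => h _ (smul_one_mem_Hhat ht)
    set A := M.toBlocks₁₁
    have hA : Aᵀ * A = 1 := (fromBlocks_mem_Omega2_iff A A).mp (hMA ▸ hM)
    have hq : Commute A qR := commute_qR_of_act_eq (hMA ▸ h _ I_smul_one_add_qR_mem_Hhat)
    rcases eq_one_or_of_commute_qR hq hA with hA1 | hA1 | hA1 | hA1 <;> rw [hMA, hA1]
    · exact Or.inl fromBlocks_one
    · exact Or.inr (Or.inl (by rw [fromBlocks_diagonal_neg, fromBlocks_one]))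
    · exact Or.inr (Or.inr (Or.inl rfl))
    · exact Or.inr (Or.inr (Or.inr (fromBlocks_diagonal_neg qR)))
  · rintro (rfl | rfl | rfl | rfl) Z hZ
    · rw [← fromBlocks_one]
      exact act_fromBlocks_diagonal_eq_self (Commute.one_left _) (by simp) hZ
    · rw [← fromBlocks_one, ← fromBlocks_diagonal_neg]
      exact act_fromBlocks_diagonal_eq_self (Commute.one_left _).neg_left (by simp) hZ
    · exact act_fromBlocks_diagonal_eq_self (Commute.refl _) qR_transpose_mul_self hZ
    · rw [Qmat, ← fromBlocks_diagonal_neg]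
      exact act_fromBlocks_diagonal_eq_self (Commute.refl _).neg_left
        (by simpa using qR_transpose_mul_self) hZ
end
end

section
/- The action of Ω̂₂ on Ĥ₂ is transitive: for any Z, W ∈ Ĥ₂ there exists M ∈ Ω̂₂ with M<Z> = W. In particular, for every Z ∈ Ĥ₂ there exists M ∈ Ω̂₂ with M<Z> = iI. -/
open Matrix Complex

noncomputable section

/-! Bi-symmetric matrices are simultaneously diagonalised by the eigenvectors `(1, 1)` and
`(1, -1)`, which identifies `Ĥ₂` with `ℍ × ℍ` via `Z ↦ (τ + z, τ - z)`. Block upper triangular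
symplectic matrices with bi-symmetric blocks act on the two coordinates by independent affine
maps `w ↦ r² w + c`, and these already act transitively on `ℍ`. -/

/-- The bi-symmetric matrix with eigenvalue `s` on `(1, 1)` and `t` on `(1, -1)`. In these
coordinates bi-symmetric matrices add, multiply and invert componentwise. -/
def bisymm {K : Type*} [Field K] (s t : K) : Matrix (Fin 2) (Fin 2) K :=
  !![(s + t) / 2, (s - t) / 2; (s - t) / 2, (s + t) / 2]

lemma transpose_bisymm {K : Type*} [Field K] (s t : K) : (bisymm s t)ᵀ = bisymm s t := by
  ext i j
  fin_cases i <;> fin_cases j <;> rfl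

section Bisymm

variable {K : Type*} [Field K] [CharZero K]

lemma bisymm_mul (s t s' t' : K) : bisymm s t * bisymm s' t' = bisymm (s * s') (t * t') := by
  ext i j
  fin_cases i <;> fin_cases j <;> simp [bisymm, Matrix.mul_apply, Fin.sum_univ_two] <;> ring

lemma bisymm_add (s t s' t' : K) : bisymm s t + bisymm s' t' = bisymm (s + s') (t + t') := by
  ext i j
  fin_cases i <;> fin_cases j <;> simp [bisymm] <;> ring

lemma bisymm_one_one : bisymm (1 : K) 1 = 1 := by
  ext i j
  fin_cases i <;> fin_cases j <;> simp [bisymm]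

lemma inv_bisymm {s t : K} (hs : s ≠ 0) (ht : t ≠ 0) : (bisymm s t)⁻¹ = bisymm s⁻¹ t⁻¹ :=
  Matrix.inv_eq_left_inv <| by
    rw [bisymm_mul, inv_mul_cancel₀ hs, inv_mul_cancel₀ ht, bisymm_one_one]

end Bisymm

lemma map_ofReal_bisymm (s t : ℝ) : (bisymm s t).map ofReal = bisymm (s : ℂ) t := by
  ext i j
  fin_cases i <;> fin_cases j <;> simp [bisymm]

lemma mem_Hhat_iff {Z : Mat2} :
    Z ∈ Hhat ↔ ∃ s t : ℂ, 0 < s.im ∧ 0 < t.im ∧ Z = bisymm s t := by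
  constructor
  · rintro ⟨h11, h10, hIm⟩
    refine ⟨Z 0 0 + Z 0 1, Z 0 0 - Z 0 1, ?_, ?_, ?_⟩
    · simp only [add_im]; linarith [abs_lt.1 hIm]
    · simp only [sub_im]; linarith [abs_lt.1 hIm]
    · ext i j
      fin_cases i <;> fin_cases j <;> simp [bisymm, h11, h10]
  · rintro ⟨s, t, hs, ht, rfl⟩
    refine ⟨rfl, rfl, abs_lt.2 ⟨?_, ?_⟩⟩ <;>
      simp [bisymm, div_ofNat_im] <;> linarith

lemma fromBlocks_zero₂₁_mem_Omega2 {A B D : Mat2R} (hAD : Aᵀ * D = 1) (hBD : Bᵀ * D = Dᵀ * B) :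
    Matrix.fromBlocks A B 0 D ∈ Omega2 := by
  have hDA : Dᵀ * A = 1 := by
    rw [← transpose_transpose (Dᵀ * A), transpose_mul, transpose_transpose, hAD, transpose_one]
  simp only [Omega2, Set.mem_ofPred_eq, Jmat, fromBlocks_transpose, fromBlocks_multiply,
    Matrix.mul_zero, Matrix.zero_mul, Matrix.mul_one, Matrix.mul_neg, Matrix.neg_mul,
    transpose_zero, add_zero, zero_add, neg_zero, hAD, hDA, hBD, neg_add_cancel]

lemma act_fromBlocks_zero₂₁ (A B D : Mat2R) (Z : Mat2) :
    act (Matrix.fromBlocks A B 0 D) Z =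
      (A.map ofReal * Z + B.map ofReal) * (D.map ofReal)⁻¹ := by
  simp [act]

def affineSp (r₁ r₂ c₁ c₂ : ℝ) : Mat4 :=
  Matrix.fromBlocks (bisymm r₁ r₂) (bisymm (c₁ / r₁) (c₂ / r₂)) 0 (bisymm r₁⁻¹ r₂⁻¹)

lemma affineSp_mem_Omega2 {r₁ r₂ : ℝ} (c₁ c₂ : ℝ) (h₁ : r₁ ≠ 0) (h₂ : r₂ ≠ 0) :
    affineSp r₁ r₂ c₁ c₂ ∈ Omega2 := by
  refine fromBlocks_zero₂₁_mem_Omega2 ?_ ?_ <;>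
    simp only [transpose_bisymm, bisymm_mul, mul_inv_cancel₀ h₁, mul_inv_cancel₀ h₂,
      bisymm_one_one, mul_comm]

lemma act_affineSp {r₁ r₂ : ℝ} (c₁ c₂ : ℝ) (h₁ : r₁ ≠ 0) (h₂ : r₂ ≠ 0) (s t : ℂ) :
    act (affineSp r₁ r₂ c₁ c₂) (bisymm s t) = bisymm (r₁ ^ 2 * s + c₁) (r₂ ^ 2 * t + c₂) := by
  have h₁' : (r₁ : ℂ) ≠ 0 := ofReal_ne_zero.2 h₁
  have h₂' : (r₂ : ℂ) ≠ 0 := ofReal_ne_zero.2 h₂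
  rw [affineSp, act_fromBlocks_zero₂₁]
  simp only [map_ofReal_bisymm]
  rw [inv_bisymm (ofReal_ne_zero.2 (inv_ne_zero h₁)) (ofReal_ne_zero.2 (inv_ne_zero h₂)),
    bisymm_mul, bisymm_add, bisymm_mul]
  congr 1 <;> push_cast <;> field_simp

lemma affineSp_mem_OmegaHat {r₁ r₂ : ℝ} (c₁ c₂ : ℝ) (h₁ : r₁ ≠ 0) (h₂ : r₂ ≠ 0) :
    affineSp r₁ r₂ c₁ c₂ ∈ OmegaHat := by
  refine ⟨affineSp_mem_Omega2 c₁ c₂ h₁ h₂, fun Z hZ ↦ ?_⟩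
  obtain ⟨s, t, hs, ht, rfl⟩ := mem_Hhat_iff.1 hZ
  rw [act_affineSp c₁ c₂ h₁ h₂]
  refine mem_Hhat_iff.2 ⟨_, _, ?_, ?_, rfl⟩ <;>
    simp only [add_im, ofReal_im, add_zero, ← ofReal_pow, im_ofReal_mul] <;> positivity

lemma exists_sq_mul_add_eq {w u : ℂ} (hw : 0 < w.im) (hu : 0 < u.im) :
    ∃ r c : ℝ, r ≠ 0 ∧ (r : ℂ) ^ 2 * w + c = u := by
  have hd : 0 < u.im / w.im := div_pos hu hw
  refine ⟨√(u.im / w.im), u.re - √(u.im / w.im) ^ 2 * w.re, (Real.sqrt_pos.2 hd).ne', ?_⟩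
  apply Complex.ext <;> simp only [add_re, add_im, ← ofReal_pow, re_ofReal_mul, im_ofReal_mul,
    ofReal_re, ofReal_im]
  · ring
  · rw [Real.sq_sqrt hd.le, div_mul_cancel₀ _ hw.ne', add_zero]

/-- the action of `Ω̂₂` on `Ĥ₂` is transitive; in particular every
point of `Ĥ₂` can be moved to `iI`. -/
theorem stmt_4 :
    (∀ Z ∈ Hhat, ∀ W ∈ Hhat, ∃ M ∈ OmegaHat, act M Z = W) ∧
    (∀ Z ∈ Hhat, ∃ M ∈ OmegaHat, act M Z = Complex.I • (1 : Mat2)) := by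
  have transitive : ∀ Z ∈ Hhat, ∀ W ∈ Hhat, ∃ M ∈ OmegaHat, act M Z = W := by
    intro Z hZ W hW
    obtain ⟨s, t, hs, ht, rfl⟩ := mem_Hhat_iff.1 hZ
    obtain ⟨s', t', hs', ht', rfl⟩ := mem_Hhat_iff.1 hW
    obtain ⟨r₁, c₁, hr₁, hs⟩ := exists_sq_mul_add_eq hs hs'
    obtain ⟨r₂, c₂, hr₂, ht⟩ := exists_sq_mul_add_eq ht ht'
    exact ⟨affineSp r₁ r₂ c₁ c₂, affineSp_mem_OmegaHat c₁ c₂ hr₁ hr₂,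
      by rw [act_affineSp c₁ c₂ hr₁ hr₂, hs, ht]⟩
  have hI : Complex.I • (1 : Mat2) = bisymm I I := by
    ext i j
    fin_cases i <;> fin_cases j <;> simp [bisymm]
  refine ⟨transitive, fun Z hZ ↦ transitive Z hZ _ (mem_Hhat_iff.2 ⟨I, I, ?_, ?_, hI⟩)⟩ <;> simp
end
end

section
/- Let f be a bijective holomorphic map from Ê₂ onto itself with holomorphic inverse (Ê₂ being regarded as an open subset of ℂ² via the coordinates Z₀ = [[z₁,z₂],[z₂,z₁]] ↦ (z₁,z₂)) such that f(0) = 0. Then there exists a unitary 2×2 complex matrix U with qU = Uq or qU = −Uq such that f(Z₀) = ᵗU Z₀ U for all Z₀ ∈ Ê₂. -/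
open Matrix Complex

noncomputable section

open ComplexOrder

/-- `q` as a complex matrix. -/
def qC : Mat2 := !![0, 1; 1, 0]

/-- Entrywise complex conjugation of a matrix. -/
def conjM (Z : Mat2) : Mat2 := Z.map (starRingEnd ℂ)

/-- The bounded domain `Ê₂ = {Z₀ : qZ₀ = Z₀q, I − Z₀·conj(Z₀) positive definite}`. -/
def Ehat : Set Mat2 := {Z | qC * Z = Z * qC ∧ (1 - Z * conjM Z).PosDef}

/-- The bi-symmetric matrix `[[z₁,z₂],[z₂,z₁]]` associated to `(z₁, z₂) ∈ ℂ²`. -/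
def mk2 (p : ℂ × ℂ) : Mat2 := !![p.1, p.2; p.2, p.1]

/-- `Ê₂` regarded as a subset of `ℂ²`. -/
def EhatP : Set (ℂ × ℂ) := {p | mk2 p ∈ Ehat}

/-!
The linear change of coordinates `(z₁, z₂) ↦ (z₁ + z₂, z₁ - z₂)` diagonalises all bi-symmetric
matrices at once and maps `Ê₂` onto the unit bidisc. A biholomorphism of the bidisc fixing `0`
preserves the sup norm, by the Schwarz lemma applied to it and to its inverse. The maximum
modulus principle then forces each of its coordinates to be a unimodular multiple of one
coordinate, so it is `(w₁, w₂) ↦ (γ₁ w₁, γ₂ w₂)` or `(w₁, w₂) ↦ (γ₁ w₂, γ₂ w₁)`. With `c² = γ`, the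
bi-symmetric matrix `U` with eigenvalues `c₁, c₂` (multiplied by `diag(1, -1)` in the second case)
realises this map as `Z₀ ↦ ᵗU Z₀ U`.
-/

open Metric Set Function

theorem Complex.eqOn_ball_of_eqOn_annulus {g h : ℂ → ℂ} {r : ℝ} (hr : r < 1)
    (hg : DifferentiableOn ℂ g (ball 0 1)) (hh : DifferentiableOn ℂ h (ball 0 1))
    (heq : ∀ z : ℂ, r < ‖z‖ → ‖z‖ < 1 → g z = h z) : EqOn g h (ball 0 1) := by
  obtain ⟨t, ht0, hrt, ht1⟩ : ∃ t : ℝ, 0 ≤ t ∧ r < t ∧ t < 1 :=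
    ⟨(max r 0 + 1) / 2, by positivity, by linarith [le_max_left r 0, max_lt hr one_pos],
      by linarith [max_lt hr one_pos]⟩
  have ht : r < ‖(t : ℂ)‖ ∧ ‖(t : ℂ)‖ < 1 := by
    rw [Complex.norm_of_nonneg ht0]
    exact ⟨hrt, ht1⟩
  have hannulus : IsOpen {z : ℂ | r < ‖z‖ ∧ ‖z‖ < 1} :=
    (isOpen_lt continuous_const continuous_norm).inter (isOpen_lt continuous_norm continuous_const)
  refine (hg.analyticOnNhd isOpen_ball).eqOn_of_preconnected_of_eventuallyEq
    (hh.analyticOnNhd isOpen_ball) (convex_ball 0 1).isPreconnected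
    (mem_ball_zero_iff.2 ht.2) ?_
  filter_upwards [hannulus.mem_nhds ht] with z hz using heq z hz.1 hz.2

theorem Complex.zero_lt_one_sub_mul_star_iff (z : ℂ) : 0 < 1 - z * star z ↔ ‖z‖ < 1 := by
  rw [Complex.star_def, mul_conj', ← ofReal_pow, ← ofReal_one, ← ofReal_sub, zero_lt_real,
    sub_pos, sq_lt_one_iff₀ (norm_nonneg z)]

theorem Complex.exists_mul_self_eq_and_star_mul_self_eq_one {z : ℂ} (hz : ‖z‖ = 1) :
    ∃ a : ℂ, a * a = z ∧ star a * a = 1 := by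
  obtain ⟨a, ha⟩ := IsAlgClosed.exists_pow_nat_eq z two_pos
  have hna : ‖a‖ = 1 := by
    rwa [← pow_left_inj₀ (norm_nonneg a) zero_le_one two_ne_zero, one_pow, ← norm_pow, ha]
  refine ⟨a, by rw [← ha, sq], ?_⟩
  rw [Complex.star_def, conj_mul', hna]
  norm_num

theorem Prod.norm_swap {E F : Type*} [SeminormedAddCommGroup E] [SeminormedAddCommGroup F]
    (w : E × F) : ‖w.swap‖ = ‖w‖ := by
  simp [Prod.norm_def, max_comm]

section

variable {E : Type*} [NormedAddCommGroup E] [NormedSpace ℂ E]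

theorem norm_apply_eq_of_leftInvOn_ball {F G : E → E} {R : ℝ}
    (hF : DifferentiableOn ℂ F (ball 0 R)) (hG : DifferentiableOn ℂ G (ball 0 R))
    (hFm : MapsTo F (ball 0 R) (ball 0 R)) (hGm : MapsTo G (ball 0 R) (ball 0 R))
    (hF0 : F 0 = 0) (hGF : LeftInvOn G F (ball 0 R)) {w : E} (hw : w ∈ ball 0 R) :
    ‖F w‖ = ‖w‖ := by
  have hG0 : G 0 = 0 := by
    simpa [hF0] using hGF (mem_ball_self (pos_of_mem_ball hw))
  refine le_antisymm (Complex.norm_le_norm_of_mapsTo_ball hF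
    (hFm.mono_right ball_subset_closedBall) hF0 (mem_ball_zero_iff.1 hw)) ?_
  calc ‖w‖ = ‖G (F w)‖ := by rw [hGF hw]
    _ ≤ ‖F w‖ := Complex.norm_le_norm_of_mapsTo_ball hG
      (hGm.mono_right ball_subset_closedBall) hG0 (mem_ball_zero_iff.1 (hFm hw))

theorem eq_mul_fst_of_norm_le {φ : ℂ × E → ℂ} (hd : DifferentiableOn ℂ φ (ball 0 1))
    (hle : ∀ w ∈ ball (0 : ℂ × E) 1, ‖φ w‖ ≤ ‖w‖)
    {x : ℂ} (hx0 : x ≠ 0) (hx1 : ‖x‖ < 1) (hφx : ‖φ (x, 0)‖ = ‖x‖) :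
    ∃ γ : ℂ, ‖γ‖ = 1 ∧ ∀ w ∈ ball (0 : ℂ × E) 1, φ w = γ * w.1 := by
  have hmem : ∀ {z : ℂ} {b : E}, ‖z‖ < 1 → ‖b‖ < 1 → (z, b) ∈ ball (0 : ℂ × E) 1 :=
    fun hz hb => mem_ball_zero_iff.2 (by rw [Prod.norm_mk]; exact max_lt hz hb)
  have hφ0 : φ (0, 0) = 0 := by simpa using hle (0, 0) (mem_ball_self one_pos)
  -- on the axis `E = 0` this is the equality case of the one-variable Schwarz lemma
  obtain ⟨γ, hγ, haxis⟩ : ∃ γ : ℂ, ‖γ‖ = 1 ∧ ∀ z : ℂ, ‖z‖ < 1 → φ (z, 0) = γ * z := by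
    have hdaxis : DifferentiableOn ℂ (fun z : ℂ => φ (z, 0)) (ball 0 1) :=
      hd.comp (by fun_prop) fun z hz => hmem (mem_ball_zero_iff.1 hz) (by simp)
    have hmaps : MapsTo (fun z : ℂ => φ (z, 0)) (ball 0 1) (closedBall (φ (0, 0)) 1) := by
      intro z hz
      have := hle (z, 0) (hmem (mem_ball_zero_iff.1 hz) (by simp))
      rw [Prod.norm_mk, norm_zero, max_eq_left (norm_nonneg _)] at this
      rw [hφ0, mem_closedBall_zero_iff]
      exact this.trans (mem_ball_zero_iff.1 hz).le
    obtain ⟨γ, hγ, heq⟩ := Complex.affine_of_mapsTo_ball_of_exists_norm_dslope_eq_div' hdaxis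
      hmaps ⟨x, mem_ball_zero_iff.2 hx1, by
        rw [dslope_of_ne _ hx0, slope_def_field, hφ0, sub_zero, sub_zero, norm_div, hφx,
          div_self (norm_ne_zero_iff.2 hx0), div_one]⟩
    refine ⟨γ, by simpa using hγ, fun z hz => ?_⟩
    simpa [hφ0, mul_comm] using heq (mem_ball_zero_iff.2 hz)
  -- for `‖b‖ < ‖z‖` the map `b ↦ φ (z, b)` attains its maximal modulus `‖z‖` at `b = 0`
  have hsector : ∀ (z : ℂ) (b : E), ‖b‖ < ‖z‖ → ‖z‖ < 1 → φ (z, b) = γ * z := by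
    intro z b hb hz
    have hball : MapsTo (fun b : E => (z, b)) (ball 0 ‖z‖) (ball 0 1) :=
      fun b' hb' => hmem hz ((mem_ball_zero_iff.1 hb').trans hz)
    have hmax : IsMaxOn (norm ∘ fun b : E => φ (z, b)) (ball 0 ‖z‖) 0 := by
      intro b' hb'
      have := hle _ (hball hb')
      rw [Prod.norm_mk, max_eq_left (mem_ball_zero_iff.1 hb').le] at this
      simpa [haxis z hz, hγ] using this
    have := Complex.eqOn_of_isPreconnected_of_isMaxOn_norm (convex_ball (0 : E) _).isPreconnected
      isOpen_ball (hd.comp (by fun_prop) hball) (mem_ball_self (hb.trans_le' (norm_nonneg _)))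
      hmax (mem_ball_zero_iff.2 hb)
    simpa [haxis z hz] using this
  refine ⟨γ, hγ, fun ⟨z, b⟩ hw => ?_⟩
  rw [mem_ball_zero_iff, Prod.norm_mk, max_lt_iff] at hw
  exact Complex.eqOn_ball_of_eqOn_annulus hw.2
    (hd.comp (by fun_prop) fun z' hz' => hmem (mem_ball_zero_iff.1 hz') hw.2) (by fun_prop)
    (fun z' h1 h2 => hsector z' b h1 h2) (mem_ball_zero_iff.2 hw.1)

end

theorem eq_mul_snd_of_norm_le {φ : ℂ × ℂ → ℂ} (hd : DifferentiableOn ℂ φ (ball 0 1))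
    (hle : ∀ w ∈ ball (0 : ℂ × ℂ) 1, ‖φ w‖ ≤ ‖w‖)
    {x : ℂ} (hx0 : x ≠ 0) (hx1 : ‖x‖ < 1) (hφx : ‖φ (0, x)‖ = ‖x‖) :
    ∃ δ : ℂ, ‖δ‖ = 1 ∧ ∀ w ∈ ball (0 : ℂ × ℂ) 1, φ w = δ * w.2 := by
  have hswap : MapsTo Prod.swap (ball (0 : ℂ × ℂ) 1) (ball 0 1) := fun w hw => by
    simpa [Prod.norm_swap] using hw
  obtain ⟨δ, hδ, h⟩ := eq_mul_fst_of_norm_le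
    (hd.comp (differentiable_snd.prodMk differentiable_fst).differentiableOn hswap)
    (fun w hw => (hle _ (hswap hw)).trans_eq w.norm_swap) hx0 hx1 hφx
  exact ⟨δ, hδ, fun w hw => h w.swap (hswap hw)⟩

theorem exists_eq_mul_or_eq_mul_swap_of_norm_eq {F : ℂ × ℂ → ℂ × ℂ}
    (hd : DifferentiableOn ℂ F (ball 0 1)) (hn : ∀ w ∈ ball (0 : ℂ × ℂ) 1, ‖F w‖ = ‖w‖) :
    ∃ γ : ℂ × ℂ, ‖γ.1‖ = 1 ∧ ‖γ.2‖ = 1 ∧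
      ((∀ w ∈ ball (0 : ℂ × ℂ) 1, F w = γ * w) ∨ ∀ w ∈ ball (0 : ℂ × ℂ) 1, F w = γ * w.swap) := by
  have hx0 : (2⁻¹ : ℂ) ≠ 0 := by norm_num
  have hx1 : ‖(2⁻¹ : ℂ)‖ < 1 := by norm_num
  have hle₁ : ∀ w ∈ ball (0 : ℂ × ℂ) 1, ‖(F w).1‖ ≤ ‖w‖ := fun w hw =>
    (le_max_left _ _).trans (hn w hw).le
  have hle₂ : ∀ w ∈ ball (0 : ℂ × ℂ) 1, ‖(F w).2‖ ≤ ‖w‖ := fun w hw =>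
    (le_max_right _ _).trans (hn w hw).le
  have hmem₂ : ((0 : ℂ), (2⁻¹ : ℂ)) ∈ ball (0 : ℂ × ℂ) 1 := by simpa using hx1
  have hn₁ := hn ((2⁻¹ : ℂ), 0) (by simpa using hx1)
  have hn₂ := hn _ hmem₂
  rw [Prod.norm_def (F _), Prod.norm_mk, norm_zero, max_eq_left (norm_nonneg _)] at hn₁
  rw [Prod.norm_def (F _), Prod.norm_mk, norm_zero, max_eq_right (norm_nonneg _)] at hn₂
  rcases max_choice ‖(F (2⁻¹, 0)).1‖ ‖(F (2⁻¹, 0)).2‖ with h | h <;> rw [h] at hn₁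
  · obtain ⟨γ, hγ, h₁⟩ := eq_mul_fst_of_norm_le hd.fst hle₁ hx0 hx1 hn₁
    rw [h₁ _ hmem₂, mul_zero, norm_zero, max_eq_right (norm_nonneg _)] at hn₂
    obtain ⟨δ, hδ, h₂⟩ := eq_mul_snd_of_norm_le hd.snd hle₂ hx0 hx1 hn₂
    exact ⟨(γ, δ), hγ, hδ, Or.inl fun w hw => Prod.ext (h₁ w hw) (h₂ w hw)⟩
  · obtain ⟨δ, hδ, h₂⟩ := eq_mul_fst_of_norm_le hd.snd hle₂ hx0 hx1 hn₁
    rw [h₂ _ hmem₂, mul_zero, norm_zero, max_eq_left (norm_nonneg _)] at hn₂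
    obtain ⟨γ, hγ, h₁⟩ := eq_mul_snd_of_norm_le hd.fst hle₁ hx0 hx1 hn₂
    exact ⟨(γ, δ), hγ, hδ, Or.inr fun w hw => Prod.ext (h₁ w hw) (h₂ w hw)⟩

-- `toEigen p` lists the eigenvalues of `mk2 p`, for the eigenvectors `(1, 1)` and `(1, -1)`;
-- `bisym w` is the bi-symmetric matrix with eigenvalues `w`.
def toEigen (p : ℂ × ℂ) : ℂ × ℂ := (p.1 + p.2, p.1 - p.2)

def ofEigen (w : ℂ × ℂ) : ℂ × ℂ := ((w.1 + w.2) / 2, (w.1 - w.2) / 2)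

@[simp] theorem ofEigen_toEigen (p : ℂ × ℂ) : ofEigen (toEigen p) = p := by
  simp only [ofEigen, toEigen]; ext <;> ring

@[simp] theorem toEigen_ofEigen (w : ℂ × ℂ) : toEigen (ofEigen w) = w := by
  simp only [ofEigen, toEigen]; ext <;> ring

theorem differentiable_toEigen : Differentiable ℂ toEigen := by unfold toEigen; fun_prop

theorem differentiable_ofEigen : Differentiable ℂ ofEigen := by unfold ofEigen; fun_prop

def bisym (w : ℂ × ℂ) : Mat2 := mk2 (ofEigen w)

theorem mk2_eq_bisym (p : ℂ × ℂ) : mk2 p = bisym (toEigen p) := by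
  rw [bisym, ofEigen_toEigen]

theorem bisym_mul (w w' : ℂ × ℂ) : bisym w * bisym w' = bisym (w * w') := by
  ext i j; fin_cases i <;> fin_cases j <;> simp [bisym, mk2, ofEigen, Matrix.mul_apply] <;> ring

theorem bisym_one : bisym 1 = 1 := by
  ext i j; fin_cases i <;> fin_cases j <;> simp [bisym, mk2, ofEigen]

theorem bisym_sub (w w' : ℂ × ℂ) : bisym (w - w') = bisym w - bisym w' := by
  ext i j; fin_cases i <;> fin_cases j <;> simp [bisym, mk2, ofEigen] <;> ring

theorem transpose_bisym (w : ℂ × ℂ) : (bisym w)ᵀ = bisym w := by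
  ext i j; fin_cases i <;> fin_cases j <;> simp [bisym, mk2]

theorem conjTranspose_bisym (w : ℂ × ℂ) : (bisym w)ᴴ = bisym (star w) := by
  ext i j; fin_cases i <;> fin_cases j <;> simp [bisym, mk2, ofEigen]

theorem conjM_bisym (w : ℂ × ℂ) : conjM (bisym w) = bisym (star w) := by
  ext i j; fin_cases i <;> fin_cases j <;> simp [conjM, bisym, mk2, ofEigen, map_ofNat]

theorem qC_eq_bisym : qC = bisym (1, -1) := by
  ext i j; fin_cases i <;> fin_cases j <;> simp [qC, bisym, mk2, ofEigen]

def diagSign : Mat2 := !![1, 0; 0, -1]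

theorem diagSign_mul_bisym_mul_diagSign (w : ℂ × ℂ) :
    diagSign * bisym w * diagSign = bisym w.swap := by
  ext i j
  fin_cases i <;> fin_cases j <;> simp [diagSign, bisym, mk2, ofEigen, Matrix.mul_apply] <;> ring

theorem qC_mul_diagSign : qC * diagSign = -(diagSign * qC) := by
  ext i j; fin_cases i <;> fin_cases j <;> simp [diagSign, qC]

def hadamardMatrix : Mat2 := !![1, 1; 1, -1]

theorem star_hadamardMatrix_mul_bisym_mul_hadamardMatrix (w : ℂ × ℂ) :
    star hadamardMatrix * bisym w * hadamardMatrix = diagonal ![2 * w.1, 2 * w.2] := by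
  ext i j
  fin_cases i <;> fin_cases j <;>
    simp [hadamardMatrix, bisym, mk2, ofEigen, Matrix.mul_apply] <;> ring

theorem isUnit_hadamardMatrix : IsUnit hadamardMatrix := by
  rw [Matrix.isUnit_iff_isUnit_det, Matrix.det_fin_two]
  norm_num [hadamardMatrix]

theorem posDef_bisym_iff (w : ℂ × ℂ) : (bisym w).PosDef ↔ 0 < w.1 ∧ 0 < w.2 := by
  rw [← isUnit_hadamardMatrix.posDef_star_left_conjugate_iff,
    star_hadamardMatrix_mul_bisym_mul_hadamardMatrix, posDef_diagonal_iff, Fin.forall_fin_two]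
  simp

theorem qC_mul_bisym (w : ℂ × ℂ) : qC * bisym w = bisym w * qC := by
  rw [qC_eq_bisym, bisym_mul, bisym_mul, mul_comm]

theorem mem_EhatP_iff {p : ℂ × ℂ} : p ∈ EhatP ↔ toEigen p ∈ ball 0 1 := by
  change qC * mk2 p = mk2 p * qC ∧ (1 - mk2 p * conjM (mk2 p)).PosDef ↔ _
  rw [mk2_eq_bisym, conjM_bisym, bisym_mul, ← bisym_one,
    ← bisym_sub, posDef_bisym_iff, mem_ball_zero_iff, Prod.norm_def, max_lt_iff]
  simp only [qC_mul_bisym, true_and, Prod.fst_sub, Prod.snd_sub, Prod.fst_mul, Prod.snd_mul,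
    Prod.fst_one, Prod.snd_one, Prod.fst_star, Prod.snd_star, Complex.zero_lt_one_sub_mul_star_iff]

theorem bisym_conjTranspose_mul_self {c : ℂ × ℂ} (hc : star c * c = 1) :
    (bisym c)ᴴ * bisym c = 1 := by
  rw [conjTranspose_bisym, bisym_mul, hc, bisym_one]

theorem bisym_transpose_conj (c w : ℂ × ℂ) :
    (bisym c)ᵀ * bisym w * bisym c = bisym (c * c * w) := by
  rw [transpose_bisym, bisym_mul, bisym_mul, mul_right_comm]

theorem transpose_diagSign : diagSignᵀ = diagSign := by
  ext i j; fin_cases i <;> fin_cases j <;> simp [diagSign]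

theorem conjTranspose_diagSign : diagSignᴴ = diagSign := by
  ext i j; fin_cases i <;> fin_cases j <;> simp [diagSign]

theorem diagSign_mul_diagSign : diagSign * diagSign = 1 := by
  ext i j; fin_cases i <;> fin_cases j <;> simp [diagSign]

theorem diagSign_mul_bisym_conjTranspose_mul_self {c : ℂ × ℂ} (hc : star c * c = 1) :
    (diagSign * bisym c)ᴴ * (diagSign * bisym c) = 1 := by
  rw [conjTranspose_mul, conjTranspose_diagSign, Matrix.mul_assoc, ← Matrix.mul_assoc diagSign,
    diagSign_mul_diagSign, Matrix.one_mul, bisym_conjTranspose_mul_self hc]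

theorem qC_mul_diagSign_mul_bisym (c : ℂ × ℂ) :
    qC * (diagSign * bisym c) = -(diagSign * bisym c * qC) := by
  rw [← Matrix.mul_assoc, qC_mul_diagSign, Matrix.neg_mul, Matrix.mul_assoc, qC_mul_bisym,
    Matrix.mul_assoc]

theorem diagSign_mul_bisym_transpose_conj (c w : ℂ × ℂ) :
    (diagSign * bisym c)ᵀ * bisym w * (diagSign * bisym c) = bisym (c * c * w.swap) := by
  rw [transpose_mul, transpose_bisym, transpose_diagSign,
    show bisym c * diagSign * bisym w * (diagSign * bisym c) =
      bisym c * (diagSign * bisym w * diagSign) * bisym c by simp only [Matrix.mul_assoc],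
    diagSign_mul_bisym_mul_diagSign, ← bisym_transpose_conj, transpose_bisym]

theorem eq_of_mk2_eq {r : ℂ × ℂ} {M : Mat2} (h : mk2 r = M) : r = (M 0 0, M 0 1) := by
  subst h; rfl

theorem stmt_6_general (f g : ℂ × ℂ → ℂ × ℂ)
    (hf : Set.MapsTo f EhatP EhatP) (hg : Set.MapsTo g EhatP EhatP)
    (hgf : ∀ p ∈ EhatP, g (f p) = p)
    (hfd : DifferentiableOn ℂ f EhatP) (hgd : DifferentiableOn ℂ g EhatP)
    (h0 : f (0, 0) = (0, 0)) :
    ∃ U : Mat2, Uᴴ * U = 1 ∧ (qC * U = U * qC ∨ qC * U = -(U * qC)) ∧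
      ∀ p ∈ EhatP, f p = ((Uᵀ * mk2 p * U) 0 0, (Uᵀ * mk2 p * U) 0 1) := by
  have hof : MapsTo ofEigen (ball 0 1) EhatP := fun w hw => by simpa [mem_EhatP_iff] using hw
  have hto : MapsTo toEigen EhatP (ball 0 1) := fun p hp => mem_EhatP_iff.1 hp
  have hd : ∀ {h : ℂ × ℂ → ℂ × ℂ}, DifferentiableOn ℂ h EhatP →
      DifferentiableOn ℂ (toEigen ∘ h ∘ ofEigen) (ball 0 1) := fun hh =>
    differentiable_toEigen.comp_differentiableOn
      (hh.comp differentiable_ofEigen.differentiableOn hof)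
  have hF0 : (toEigen ∘ f ∘ ofEigen) 0 = 0 := by simp [ofEigen, toEigen, h0]
  obtain ⟨γ, hγ₁, hγ₂, hF⟩ := exists_eq_mul_or_eq_mul_swap_of_norm_eq (hd hfd)
    fun _ => norm_apply_eq_of_leftInvOn_ball (hd hfd) (hd hgd) (hto.comp (hf.comp hof))
      (hto.comp (hg.comp hof)) hF0 fun w hw => by simp [hgf _ (hof hw)]
  obtain ⟨a, haa, ha⟩ := Complex.exists_mul_self_eq_and_star_mul_self_eq_one hγ₁
  obtain ⟨b, hbb, hb⟩ := Complex.exists_mul_self_eq_and_star_mul_self_eq_one hγ₂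
  have hcc : (a, b) * (a, b) = γ := Prod.ext haa hbb
  have hc : star (a, b) * (a, b) = 1 := Prod.ext ha hb
  rcases hF with hF | hF
  · refine ⟨bisym (a, b), bisym_conjTranspose_mul_self hc, Or.inl (qC_mul_bisym _),
      fun p hp => eq_of_mk2_eq ?_⟩
    rw [mk2_eq_bisym, mk2_eq_bisym, bisym_transpose_conj, hcc]
    simpa using congrArg bisym (hF _ (hto hp))
  · refine ⟨diagSign * bisym (a, b), diagSign_mul_bisym_conjTranspose_mul_self hc,
      Or.inr (qC_mul_diagSign_mul_bisym _), fun p hp => eq_of_mk2_eq ?_⟩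
    rw [mk2_eq_bisym, mk2_eq_bisym, diagSign_mul_bisym_transpose_conj, hcc]
    simpa using congrArg bisym (hF _ (hto hp))

/-- every biholomorphic self-map of `Ê₂ ⊂ ℂ²` fixing `0` is of the
form `Z₀ ↦ ᵗU Z₀ U` with `U` unitary and `qU = ±Uq`. -/
theorem stmt_6 (f g : ℂ × ℂ → ℂ × ℂ)
    (hf : Set.MapsTo f EhatP EhatP) (hg : Set.MapsTo g EhatP EhatP)
    (hgf : ∀ p ∈ EhatP, g (f p) = p) (hfg : ∀ p ∈ EhatP, f (g p) = p)
    (hfd : DifferentiableOn ℂ f EhatP) (hgd : DifferentiableOn ℂ g EhatP)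
    (h0 : f (0, 0) = (0, 0)) :
    ∃ U : Mat2, Uᴴ * U = 1 ∧ (qC * U = U * qC ∨ qC * U = -(U * qC)) ∧
      ∀ p ∈ EhatP, f p = ((Uᵀ * mk2 p * U) 0 0, (Uᵀ * mk2 p * U) 0 1) :=
  stmt_6_general f g hf hg hgf hfd hgd h0
end
end

section
/- Let Z, Z₁ ∈ Ĥ₂ and let M = [[A,B],[C,D]] ∈ Ω̂₂, and put W = M<Z>, W₁ = M<Z₁>. Then the cross ratio satisfies 𝔯(Z,Z₁) = ᵗ(CZ₁+D) · 𝔯(W,W₁) · (ᵗ(CZ₁+D))^{-1}. In particular the trace of the cross ratio is invariant: tr 𝔯(M<Z>, M<Z₁>) = tr 𝔯(Z,Z₁). -/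
/-!
Writing `M = [[A,B],[C,D]]`, the symplectic relations give
`ᵗ(CX+D)(AY+B) - ᵗ(AX+B)(CY+D) = Y - ᵗX`. With `X = Z̄`, `Y = Z` this shows that `CZ+D` is
invertible on `Ĥ₂`, because `Im Z` is positive definite; with `X = Z₁` symmetric it gives
`M<Z> - M<Z₁> = ᵗ(CZ₁+D)⁻¹ (Z - Z₁) (CZ+D)⁻¹`. As `M` is real, the same holds for the conjugates
`M<Z̄> = conj M<Z>`. Substituting the four differences into the cross ratio, the inner factors
cancel and only the conjugation by `ᵗ(CZ₁+D)` survives.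
-/

open Matrix Complex

noncomputable section

/-- The cross ratio `𝔯(Z,Z₁) = (Z−Z₁)(Z−conj Z₁)⁻¹(conj Z−conj Z₁)(conj Z−Z₁)⁻¹`. -/
def crossRatio (Z Z₁ : Mat2) : Mat2 :=
  (Z - Z₁) * (Z - conjM Z₁)⁻¹ * (conjM Z - conjM Z₁) * (conjM Z - Z₁)⁻¹

section SymplecticBlocks

variable {n R : Type*} [Fintype n] [DecidableEq n] [CommRing R]

/-- The block form of `ᵗM J M = J` for `M = [[A,B],[C,D]]`. -/
def IsSymplecticBlocks (A B C D : Matrix n n R) : Prop :=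
  Cᵀ * A = Aᵀ * C ∧ Dᵀ * B = Bᵀ * D ∧ Aᵀ * D - Cᵀ * B = 1

namespace IsSymplecticBlocks

variable {A B C D : Matrix n n R}

lemma map {S : Type*} [CommRing S] (h : IsSymplecticBlocks A B C D) (f : R →+* S) :
    IsSymplecticBlocks (A.map f) (B.map f) (C.map f) (D.map f) := by
  obtain ⟨hAC, hBD, hAD⟩ := h
  refine ⟨?_, ?_, ?_⟩
  · rw [← transpose_map, ← transpose_map, ← Matrix.map_mul, ← Matrix.map_mul, hAC]
  · rw [← transpose_map, ← transpose_map, ← Matrix.map_mul, ← Matrix.map_mul, hBD]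
  · rw [← transpose_map, ← transpose_map, ← Matrix.map_mul, ← Matrix.map_mul,
      ← Matrix.map_sub _ (map_sub f), hAD, Matrix.map_one _ f.map_zero f.map_one]

lemma transpose_mul_sub_transpose_mul (h : IsSymplecticBlocks A B C D) (X Y : Matrix n n R) :
    (C * X + D)ᵀ * (A * Y + B) - (A * X + B)ᵀ * (C * Y + D) = Y - Xᵀ := by
  obtain ⟨hAC, hBD, hAD⟩ := h
  have hDA : Dᵀ * A - Bᵀ * C = 1 := by
    simpa only [transpose_sub, transpose_mul, transpose_transpose, transpose_one] using
      congrArg transpose hAD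
  calc (C * X + D)ᵀ * (A * Y + B) - (A * X + B)ᵀ * (C * Y + D)
      = Xᵀ * (Cᵀ * A - Aᵀ * C) * Y - Xᵀ * (Aᵀ * D - Cᵀ * B) + (Dᵀ * A - Bᵀ * C) * Y +
          (Dᵀ * B - Bᵀ * D) := by
        simp only [transpose_add, transpose_mul]
        noncomm_ring
    _ = Y - Xᵀ := by rw [hAC, hBD, hAD, hDA]; noncomm_ring

lemma mul_inv_sub_mul_inv (h : IsSymplecticBlocks A B C D) {Z Z₁ : Matrix n n R}
    (hZ₁ : Z₁ᵀ = Z₁) (hN : IsUnit (C * Z + D).det) (hN₁ : IsUnit (C * Z₁ + D).det) :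
    (A * Z + B) * (C * Z + D)⁻¹ - (A * Z₁ + B) * (C * Z₁ + D)⁻¹ =
      ((C * Z₁ + D)ᵀ)⁻¹ * (Z - Z₁) * (C * Z + D)⁻¹ := by
  set N := C * Z + D
  set N₁ := C * Z₁ + D
  have hN₁t : IsUnit N₁ᵀ.det := isUnit_det_transpose _ hN₁
  -- the bracket with `X = Y = Z₁` says `ᵗN₁ (AZ₁+B)` is symmetric
  have hsymm : N₁ᵀ * ((A * Z₁ + B) * N₁⁻¹) = (A * Z₁ + B)ᵀ := by
    have := h.transpose_mul_sub_transpose_mul Z₁ Z₁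
    rw [hZ₁, sub_self, sub_eq_zero] at this
    rw [← Matrix.mul_assoc, this, mul_nonsing_inv_cancel_right _ _ hN₁]
  have key : N₁ᵀ * ((A * Z + B) * N⁻¹ - (A * Z₁ + B) * N₁⁻¹) * N = Z - Z₁ := by
    have hbr := h.transpose_mul_sub_transpose_mul Z₁ Z
    rw [hZ₁] at hbr
    rw [Matrix.mul_sub, hsymm, Matrix.sub_mul, ← Matrix.mul_assoc,
      nonsing_inv_mul_cancel_right _ _ hN, hbr]
  rw [← key]
  simp only [Matrix.mul_assoc, nonsing_inv_mul_cancel_left _ _ hN₁t, mul_nonsing_inv _ hN,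
    Matrix.mul_one]

end IsSymplecticBlocks

lemma sandwich_mul_inv_mul_sandwich_mul_inv {P Q N N' : Matrix n n R} (hP : IsUnit P.det)
    (hQ : IsUnit Q.det) (hN : IsUnit N.det) (hN' : IsUnit N'.det) (a b c d : Matrix n n R) :
    P⁻¹ * a * N⁻¹ * (Q⁻¹ * b * N⁻¹)⁻¹ * (Q⁻¹ * c * N'⁻¹) * (P⁻¹ * d * N'⁻¹)⁻¹ =
      P⁻¹ * (a * b⁻¹ * c * d⁻¹) * P := by
  simp only [Matrix.mul_inv_rev, nonsing_inv_nonsing_inv _ hP, nonsing_inv_nonsing_inv _ hQ,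
    nonsing_inv_nonsing_inv _ hN, nonsing_inv_nonsing_inv _ hN', Matrix.mul_assoc,
    nonsing_inv_mul_cancel_left _ _ hN, mul_nonsing_inv_cancel_left _ _ hQ,
    nonsing_inv_mul_cancel_left _ _ hN']

end SymplecticBlocks

lemma isSymplecticBlocks_of_mem_Omega2 {M : Mat4} (hM : M ∈ Omega2) :
    IsSymplecticBlocks M.toBlocks₁₁ M.toBlocks₁₂ M.toBlocks₂₁ M.toBlocks₂₂ := by
  have h : Mᵀ * Jmat * M = Jmat := hM
  rw [← fromBlocks_toBlocks M, Jmat, fromBlocks_transpose, fromBlocks_multiply,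
    fromBlocks_multiply, fromBlocks_inj] at h
  simp only [Matrix.mul_zero, Matrix.mul_one, Matrix.mul_neg, Matrix.neg_mul, add_zero, zero_add,
    neg_add_eq_sub, sub_eq_zero] at h
  exact ⟨h.1.symm, h.2.2.2.symm, h.2.1⟩

def actNum (M : Mat4) (Z : Mat2) : Mat2 :=
  M.toBlocks₁₁.map Complex.ofReal * Z + M.toBlocks₁₂.map Complex.ofReal

def actDenom (M : Mat4) (Z : Mat2) : Mat2 :=
  M.toBlocks₂₁.map Complex.ofReal * Z + M.toBlocks₂₂.map Complex.ofReal

lemma act_eq_actNum_mul_inv (M : Mat4) (Z : Mat2) : act M Z = actNum M Z * (actDenom M Z)⁻¹ :=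
  rfl

lemma isSymplecticBlocks_complex_of_mem_Omega2 {M : Mat4} (hM : M ∈ Omega2) :
    IsSymplecticBlocks (M.toBlocks₁₁.map Complex.ofReal) (M.toBlocks₁₂.map Complex.ofReal)
      (M.toBlocks₂₁.map Complex.ofReal) (M.toBlocks₂₂.map Complex.ofReal) :=
  (isSymplecticBlocks_of_mem_Omega2 hM).map Complex.ofRealHom

section conjM

lemma conjM_add (X Y : Mat2) : conjM (X + Y) = conjM X + conjM Y :=
  map_add (starRingEnd ℂ).mapMatrix X Y

lemma conjM_mul (X Y : Mat2) : conjM (X * Y) = conjM X * conjM Y :=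
  map_mul (starRingEnd ℂ).mapMatrix X Y

lemma conjM_eq_conjTranspose_transpose (X : Mat2) : conjM X = Xᴴᵀ := by
  ext i j
  simp [conjM, conjTranspose_apply]

lemma transpose_conjM (X : Mat2) : (conjM X)ᵀ = conjM Xᵀ :=
  rfl

lemma conjM_inv (X : Mat2) : conjM X⁻¹ = (conjM X)⁻¹ := by
  rw [conjM_eq_conjTranspose_transpose, conjM_eq_conjTranspose_transpose,
    conjTranspose_nonsing_inv, transpose_nonsing_inv]

lemma conjM_map_ofReal (X : Mat2R) : conjM (X.map Complex.ofReal) = X.map Complex.ofReal := by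
  ext i j
  simp [conjM]

lemma det_conjM (X : Mat2) : (conjM X).det = starRingEnd ℂ X.det :=
  ((starRingEnd ℂ).map_det X).symm

lemma conjM_mulVec (X : Mat2) (v : Fin 2 → ℂ) : conjM X *ᵥ star v = star (X *ᵥ v) := by
  rw [conjM_eq_conjTranspose_transpose, mulVec_transpose, star_mulVec]

lemma actNum_conjM (M : Mat4) (Z : Mat2) : actNum M (conjM Z) = conjM (actNum M Z) := by
  rw [actNum, actNum, conjM_add, conjM_mul, conjM_map_ofReal, conjM_map_ofReal]

lemma actDenom_conjM (M : Mat4) (Z : Mat2) : actDenom M (conjM Z) = conjM (actDenom M Z) := by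
  rw [actDenom, actDenom, conjM_add, conjM_mul, conjM_map_ofReal, conjM_map_ofReal]

lemma act_conjM (M : Mat4) (Z : Mat2) : act M (conjM Z) = conjM (act M Z) := by
  rw [act_eq_actNum_mul_inv, act_eq_actNum_mul_inv, conjM_mul, conjM_inv, actNum_conjM,
    actDenom_conjM]

end conjM

section Hhat

variable {X Z Z₁ : Mat2}

lemma transpose_eq_of_mem_Hhat (hZ : Z ∈ Hhat) : Zᵀ = Z := by
  obtain ⟨h11, h10, -⟩ := hZ
  ext i j
  fin_cases i <;> fin_cases j <;> simp [h11, h10]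

lemma sub_conjM_mem_Hhat (hZ : Z ∈ Hhat) (hZ₁ : Z₁ ∈ Hhat) : Z - conjM Z₁ ∈ Hhat := by
  obtain ⟨h11, h10, him⟩ := hZ
  obtain ⟨k11, k10, kim⟩ := hZ₁
  refine ⟨by simp [conjM, h11, k11], by simp [conjM, h10, k10], ?_⟩
  simp only [Matrix.sub_apply, conjM, Matrix.map_apply, sub_im, conj_im, sub_neg_eq_add]
  exact (abs_add_le _ _).trans_lt (add_lt_add him kim)

/-- For `X = [[p,q],[q,p]]`, `Im(v* X v) = Im p (|a|² + |b|²) + Im q · 2 Re(ā b)` with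
`v = (a, b)`, and `|2 Re(ā b)| ≤ |a|² + |b|²`. -/
lemma im_star_dotProduct_mulVec_pos (hX : X ∈ Hhat) {v : Fin 2 → ℂ} (hv : v ≠ 0) :
    0 < (star v ⬝ᵥ (X *ᵥ v)).im := by
  obtain ⟨h11, h10, him⟩ := hX
  set a := v 0
  set b := v 1
  set s := normSq a + normSq b
  set t := 2 * (starRingEnd ℂ a * b).re
  have hform : (star v ⬝ᵥ (X *ᵥ v)).im = (X 0 0).im * s + (X 0 1).im * t := by
    simp only [dotProduct, mulVec, Fin.sum_univ_two, h11, h10, Pi.star_apply, RCLike.star_def,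
      s, t, a, b, mul_im, mul_re, add_im, add_re, conj_re, conj_im, normSq_apply]
    ring
  have hs : 0 < s := by
    have hab : a ≠ 0 ∨ b ≠ 0 := by
      by_contra! h
      exact hv (funext fun i => by fin_cases i <;> simp [h.1, h.2, a, b])
    rcases hab with h | h
    · exact add_pos_of_pos_of_nonneg (normSq_pos.mpr h) (normSq_nonneg b)
    · exact add_pos_of_nonneg_of_pos (normSq_nonneg a) (normSq_pos.mpr h)
  have ht : |t| ≤ s := by
    simp only [s, t, normSq_apply, mul_re, conj_re, conj_im]
    rw [abs_le]
    constructor <;> nlinarith [sq_nonneg (a.re + b.re), sq_nonneg (a.im + b.im),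
      sq_nonneg (a.re - b.re), sq_nonneg (a.im - b.im)]
  have hqt : -(|(X 0 1).im| * s) ≤ (X 0 1).im * t := by
    linarith [neg_abs_le ((X 0 1).im * t), abs_mul (X 0 1).im t,
      mul_le_mul_of_nonneg_left ht (abs_nonneg (X 0 1).im)]
  rw [hform]
  nlinarith [mul_lt_mul_of_pos_right him hs]

end Hhat

section Action

variable {M : Mat4} {Z Z₁ : Mat2}

lemma transpose_actDenom_mul_actNum_sub (hM : M ∈ Omega2) (X Y : Mat2) :
    (actDenom M X)ᵀ * actNum M Y - (actNum M X)ᵀ * actDenom M Y = Y - Xᵀ :=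
  (isSymplecticBlocks_complex_of_mem_Omega2 hM).transpose_mul_sub_transpose_mul X Y

lemma det_actDenom_ne_zero (hM : M ∈ Omega2) (hZ : Z ∈ Hhat) : (actDenom M Z).det ≠ 0 := by
  intro h
  obtain ⟨v, hv, hNv⟩ := exists_mulVec_eq_zero_iff.mpr h
  have hpos := im_star_dotProduct_mulVec_pos (sub_conjM_mem_Hhat hZ hZ) hv
  have hbr := transpose_actDenom_mul_actNum_sub hM (conjM Z) Z
  have hvN : star v ᵥ* (actDenom M (conjM Z))ᵀ = 0 := by
    rw [vecMul_transpose, actDenom_conjM, conjM_mulVec, hNv, star_zero]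
  rw [transpose_conjM, transpose_eq_of_mem_Hhat hZ] at hbr
  rw [← hbr, sub_mulVec, dotProduct_sub, ← mulVec_mulVec, ← mulVec_mulVec, dotProduct_mulVec,
    hvN, hNv] at hpos
  simp at hpos

lemma isUnit_det_actDenom (hM : M ∈ Omega2) (hZ : Z ∈ Hhat) : IsUnit (actDenom M Z).det :=
  isUnit_iff_ne_zero.mpr (det_actDenom_ne_zero hM hZ)

lemma isUnit_det_actDenom_conjM (hM : M ∈ Omega2) (hZ : Z ∈ Hhat) :
    IsUnit (actDenom M (conjM Z)).det := by
  rw [actDenom_conjM, det_conjM]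
  exact (isUnit_det_actDenom hM hZ).map _

lemma act_sub_act (hM : M ∈ Omega2) (hZ₁ : Z₁ᵀ = Z₁) (hN : IsUnit (actDenom M Z).det)
    (hN₁ : IsUnit (actDenom M Z₁).det) :
    act M Z - act M Z₁ = ((actDenom M Z₁)ᵀ)⁻¹ * (Z - Z₁) * (actDenom M Z)⁻¹ :=
  (isSymplecticBlocks_complex_of_mem_Omega2 hM).mul_inv_sub_mul_inv hZ₁ hN hN₁

lemma crossRatio_act (hM : M ∈ Omega2) (hZ : Z ∈ Hhat) (hZ₁ : Z₁ ∈ Hhat) :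
    crossRatio (act M Z) (act M Z₁) =
      ((actDenom M Z₁)ᵀ)⁻¹ * crossRatio Z Z₁ * (actDenom M Z₁)ᵀ := by
  have hZ₁t := transpose_eq_of_mem_Hhat hZ₁
  have hZ₁t' : (conjM Z₁)ᵀ = conjM Z₁ := by rw [transpose_conjM, hZ₁t]
  have hN := isUnit_det_actDenom hM hZ
  have hN' := isUnit_det_actDenom_conjM hM hZ
  have hN₁ := isUnit_det_actDenom hM hZ₁
  have hN₁' := isUnit_det_actDenom_conjM hM hZ₁
  rw [crossRatio, ← act_conjM, ← act_conjM, act_sub_act hM hZ₁t hN hN₁,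
    act_sub_act hM hZ₁t' hN hN₁', act_sub_act hM hZ₁t' hN' hN₁', act_sub_act hM hZ₁t hN' hN₁]
  exact sandwich_mul_inv_mul_sandwich_mul_inv (isUnit_det_transpose _ hN₁)
    (isUnit_det_transpose _ hN₁') hN hN' _ _ _ _

end Action

/-- behaviour of the cross ratio under `M ∈ Ω̂₂`; in particular the
trace of the cross ratio is invariant. -/
theorem stmt_9 (Z Z₁ : Mat2) (hZ : Z ∈ Hhat) (hZ₁ : Z₁ ∈ Hhat)
    (M : Mat4) (hM : M ∈ OmegaHat) :
    crossRatio Z Z₁ =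
      (M.toBlocks₂₁.map Complex.ofReal * Z₁ + M.toBlocks₂₂.map Complex.ofReal)ᵀ *
        crossRatio (act M Z) (act M Z₁) *
        ((M.toBlocks₂₁.map Complex.ofReal * Z₁ + M.toBlocks₂₂.map Complex.ofReal)ᵀ)⁻¹ ∧
    (crossRatio (act M Z) (act M Z₁)).trace = (crossRatio Z Z₁).trace := by
  change _ = (actDenom M Z₁)ᵀ * _ * ((actDenom M Z₁)ᵀ)⁻¹ ∧ _
  have hP : IsUnit (actDenom M Z₁)ᵀ.det := isUnit_det_transpose _ (isUnit_det_actDenom hM.1 hZ₁)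
  rw [crossRatio_act hM.1 hZ hZ₁]
  refine ⟨?_, trace_conj' ((isUnit_iff_isUnit_det _).mpr hP) _⟩
  rw [← Matrix.mul_assoc, mul_nonsing_inv_cancel_left _ _ hP, mul_nonsing_inv_cancel_right _ _ hP]
end
end

section
/- Let Z ∈ Ĥ₂ with imaginary part Y = Im Z, and let H = [[h₁,h₂],[h₂,h₁]] be a nonzero complex bi-symmetric 2×2 matrix. Then tr(Y^{-1} H Y^{-1} conj(H)) is a positive real number. (That is, the symplectic metric ds² = tr(Y^{-1} dZ Y^{-1} d(conj Z)) is positive definite at every point of Ĥ₂.) -/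
open Matrix Complex

noncomputable section

/-- The imaginary part `Y = Im Z` of a complex matrix, as a real matrix. -/
def imPart (Z : Mat2) : Mat2R := Z.map Complex.im

/-- The symplectic quadratic form `tr(Y⁻¹ H Y⁻¹ conj H)` at the point `Z`
(with `Y = Im Z`), evaluated on the tangent `H`. -/
def metricForm (Z H : Mat2) : ℂ :=
  (((imPart Z)⁻¹).map Complex.ofReal * H * ((imPart Z)⁻¹).map Complex.ofReal *
    conjM H).trace

/-!
Since `Z ∈ Ĥ₂`, the matrix `Y = Im Z = [[y, v], [v, y]]` with `y > |v|` is positive definite (it is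
`diag(y + v, y - v)` up to an orthogonal change of basis), hence so is `W = Y⁻¹`. Writing
`W = B⋆B` with `B` invertible and using that `conj H = Hᴴ` for symmetric `H`,
`tr(W H W conj H) = tr(C Cᴴ)` with `C = B H B⋆ ≠ 0`, which is a positive real number.
-/

open scoped ComplexOrder MatrixOrder

theorem RingHom.map_matrix_inv {n K L : Type*} [Fintype n] [DecidableEq n] [Field K] [Field L]
    (f : K →+* L) (M : Matrix n n K) : M⁻¹.map f = (M.map f)⁻¹ := by
  have hdet : (M.map f).det = f M.det := (f.map_det M).symm
  have hadj : (M.map f).adjugate = M.adjugate.map f := (f.map_adjugate M).symm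
  ext i j
  simp [Matrix.inv_def, hdet, hadj, Ring.inverse_eq_inv']

theorem Matrix.PosDef.trace_mul_mul_mul_conjTranspose_pos {𝕜 n : Type*} [RCLike 𝕜] [Fintype n]
    [DecidableEq n] {W H : Matrix n n 𝕜} (hW : W.PosDef) (hH : H ≠ 0) :
    0 < (W * H * W * Hᴴ).trace := by
  obtain ⟨B, hB, rfl⟩ :=
    CStarAlgebra.isStrictlyPositive_iff_eq_star_mul_self.mp hW.isStrictlyPositive
  rw [star_eq_conjTranspose]
  have hC : B * H * Bᴴ ≠ 0 := by
    rwa [Ne, IsUnit.mul_left_eq_zero (b := Bᴴ) hB.star, hB.mul_right_eq_zero]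
  have hcycle : (Bᴴ * B * H * (Bᴴ * B) * Hᴴ).trace = (B * H * Bᴴ * (B * H * Bᴴ)ᴴ).trace := by
    rw [show Bᴴ * B * H * (Bᴴ * B) * Hᴴ = Bᴴ * (B * H * Bᴴ * B * Hᴴ) by simp only [mul_assoc],
      trace_mul_comm]
    simp only [conjTranspose_mul, conjTranspose_conjTranspose, mul_assoc]
  rw [hcycle]
  exact (posSemidef_self_mul_conjTranspose _).trace_nonneg.lt_of_ne'
    (trace_mul_conjTranspose_self_eq_zero_iff.not.mpr hC)

theorem Matrix.posDef_biSymmetric_of_abs_lt {𝕜 : Type*} [RCLike 𝕜] {y v : ℝ} (h : |v| < y) :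
    (!![(y : 𝕜), v; v, y]).PosDef := by
  obtain ⟨hlo, hhi⟩ := abs_lt.mp h
  have hD : (diagonal ![(((y + v) / 2 : ℝ) : 𝕜), ((y - v) / 2 : ℝ)]).PosDef := by
    rw [posDef_diagonal_iff]
    intro i
    fin_cases i <;> refine RCLike.ofReal_pos.mpr ?_ <;> linarith
  have hB : Function.Injective (!![1, 1; 1, -1] : Matrix (Fin 2) (Fin 2) 𝕜).mulVec :=
    mulVec_injective_of_det_ne_zero (by simp [det_fin_two]; norm_num)
  convert hD.conjTranspose_mul_mul_same hB using 1
  ext i j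
  fin_cases i <;> fin_cases j <;> simp [mul_apply, Fin.sum_univ_two] <;> push_cast <;> ring

theorem conjM_eq_conjTranspose {H : Mat2} (hH : H.IsSymm) : conjM H = Hᴴ := by
  rw [conjTranspose, hH.eq]
  rfl

theorem posDef_map_ofReal_imPart_inv {Z : Mat2} (hZ : Z ∈ Hhat) :
    (((imPart Z)⁻¹).map Complex.ofReal).PosDef := by
  obtain ⟨hz11, hz10, him⟩ := hZ
  have hY : (imPart Z).map Complex.ofReal =
      !![((Z 0 0).im : ℂ), (Z 0 1).im; (Z 0 1).im, (Z 0 0).im] := by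
    ext i j
    fin_cases i <;> fin_cases j <;> simp [imPart, hz11, hz10]
  have hinv : (imPart Z)⁻¹.map Complex.ofReal = ((imPart Z).map Complex.ofReal)⁻¹ :=
    Complex.ofRealHom.map_matrix_inv _
  rw [hinv, hY]
  exact (posDef_biSymmetric_of_abs_lt him).inv

/-- the symplectic metric `ds² = tr(Y⁻¹ dZ Y⁻¹ d(conj Z))` is
positive definite at every point of `Ĥ₂`: for a nonzero bi-symmetric `H`,
`tr(Y⁻¹ H Y⁻¹ conj H)` is a positive real number. -/
theorem stmt_11 (Z : Mat2) (hZ : Z ∈ Hhat) (H : Mat2)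
    (hsym : H 1 1 = H 0 0 ∧ H 1 0 = H 0 1) (hne : H ≠ 0) :
    (metricForm Z H).im = 0 ∧ 0 < (metricForm Z H).re := by
  have hH : H.IsSymm := IsSymm.ext fun i j => by
    fin_cases i <;> fin_cases j <;> simp [hsym.2]
  have hpos : 0 < metricForm Z H := by
    rw [metricForm, conjM_eq_conjTranspose hH]
    exact (posDef_map_ofReal_imPart_inv hZ).trace_mul_mul_mul_conjTranspose_pos hne
  obtain ⟨hre, him⟩ := Complex.pos_iff.mp hpos
  exact ⟨him.symm, hre⟩
end
end

section
/- Let M = [[A,B],[C,D]] ∈ Ω̂₂ with QM = εMQ, ε ∈ {1,−1}, so that A = [[a₁,a₂],[εa₂,εa₁]], B = [[b₁,b₂],[εb₂,εb₁]], C = [[c₁,c₂],[εc₂,εc₁]], D = [[d₁,d₂],[εd₂,εd₁]]. Put M₁ = [[a₁+a₂, b₁+b₂],[c₁+c₂, d₁+d₂]] and M₂ = [[a₁−a₂, b₁−b₂],[c₁−c₂, d₁−d₂]]. Then M₁, M₂ ∈ SL₂(ℝ), and for every Z = [[z₁,z₂],[z₂,z₁]] ∈ Ĥ₂ one has M<Z>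 = [[ (M₁<z₁+z₂> + M₂<z₁−z₂>)/2, ε(M₁<z₁+z₂> − M₂<z₁−z₂>)/2 ],[ ε(M₁<z₁+z₂> − M₂<z₁−z₂>)/2, (M₁<z₁+z₂> + M₂<z₁−z₂>)/2 ]], where for N = [[a,b],[c,d]] ∈ SL₂(ℝ) and w in the upper half plane, N<w> = (aw+b)/(cw+d). -/
open Matrix Complex

noncomputable section

/-- Linear fractional action of a real 2×2 matrix on a complex number. -/
def mob (N : Mat2R) (w : ℂ) : ℂ :=
  ((N 0 0 : ℂ) * w + (N 0 1 : ℂ)) / ((N 1 0 : ℂ) * w + (N 1 1 : ℂ))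

/-! Write each block as `X = diag(1, ε) · X'` with `X' = [[x₁, x₂], [x₂, x₁]]` circulant; this is
exactly what `QM = εMQ` says. The real (or complex) `2 × 2` circulants form a commutative algebra
isomorphic to `K × K` through the eigenvalues `x₁ ± x₂` on the eigenvectors `(1, ±1)`. As
`diag(1, ε)² = 1`, the symplectic relation `ᵗA D - ᵗC B = 1` turns into `det M₁ = det M₂ = 1`
in the two eigenvalue coordinates, and
`(AZ + B)(CZ + D)⁻¹ = diag(1, ε) · (A'Z + B')(C'Z + D')⁻¹ · diag(1, ε)`, whose middle factor is
the circulant with eigenvalues `M₁<z₁ + z₂>` and `M₂<z₁ - z₂>`. The denominators do not vanish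
because `det Mᵢ = 1` and `Im (z₁ ± z₂) > 0`. -/

namespace Matrix

def IsSignedCirculant {R : Type*} [Mul R] (ε : R) (X : Matrix (Fin 2) (Fin 2) R) : Prop :=
  X 1 0 = ε * X 0 1 ∧ X 1 1 = ε * X 0 0

lemma IsSignedCirculant.map {R S : Type*} [Mul R] [Mul S] {ε : R}
    {X : Matrix (Fin 2) (Fin 2) R} (hX : IsSignedCirculant ε X) {f : R → S}
    (hf : ∀ x y, f (x * y) = f x * f y) : IsSignedCirculant (f ε) (X.map f) :=
  ⟨by simp [hX.1, hf], by simp [hX.2, hf]⟩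

section CommRing

variable {R : Type*} [CommRing R]

lemma isSignedCirculant_of_swap_mul_eq {ε : R} {X : Matrix (Fin 2) (Fin 2) R}
    (h : !![0, 1; 1, 0] * X = ε • (X * !![0, 1; 1, 0])) : IsSignedCirculant ε X :=
  ⟨by simpa [mul_apply] using congrFun (congrFun h 0) 0,
    by simpa [mul_apply] using congrFun (congrFun h 0) 1⟩

def eigenPair (X : Matrix (Fin 2) (Fin 2) R) : R × R := (X 0 0 + X 0 1, X 0 0 - X 0 1)

def signDiagonal (ε : R) : Matrix (Fin 2) (Fin 2) R := diagonal ![1, ε]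

lemma signDiagonal_mul_self {ε : R} (hε : ε * ε = 1) : signDiagonal ε * signDiagonal ε = 1 := by
  ext i j; fin_cases i <;> fin_cases j <;> simp [signDiagonal, hε]

end CommRing

section Field

variable {K : Type*} [Field K] [NeZero (2 : K)]

/-- The circulant matrix with eigenvalue `p.1` on `(1, 1)` and `p.2` on `(1, -1)`. -/
def circulantOfEigen : K × K →+* Matrix (Fin 2) (Fin 2) K where
  toFun p := !![(p.1 + p.2) / 2, (p.1 - p.2) / 2; (p.1 - p.2) / 2, (p.1 + p.2) / 2]
  map_one' := by
    ext i j; fin_cases i <;> fin_cases j <;> simp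
  map_mul' p q := by
    ext i j; fin_cases i <;> fin_cases j <;> simp [mul_apply] <;> field_simp <;> ring
  map_zero' := by
    ext i j; fin_cases i <;> fin_cases j <;> simp
  map_add' p q := by
    ext i j; fin_cases i <;> fin_cases j <;> simp <;> ring

lemma circulantOfEigen_apply (s t : K) :
    circulantOfEigen (s, t) = !![(s + t) / 2, (s - t) / 2; (s - t) / 2, (s + t) / 2] :=
  rfl

lemma circulantOfEigen_injective : Function.Injective (circulantOfEigen : K × K → _) := by
  intro ⟨p₁, p₂⟩ ⟨q₁, q₂⟩ h
  have h₀₀ := congrFun (congrFun h 0) 0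
  have h₀₁ := congrFun (congrFun h 0) 1
  simp only [circulantOfEigen_apply, of_apply, cons_val', cons_val_zero, cons_val_one,
    empty_val', cons_val_fin_one] at h₀₀ h₀₁
  field_simp at h₀₀ h₀₁
  exact Prod.ext (mul_left_cancel₀ two_ne_zero (by linear_combination h₀₀ + h₀₁))
    (mul_left_cancel₀ two_ne_zero (by linear_combination h₀₀ - h₀₁))

lemma circulantOfEigen_transpose (p : K × K) : (circulantOfEigen p)ᵀ = circulantOfEigen p := by
  ext i j; fin_cases i <;> fin_cases j <;> rfl

lemma circulantOfEigen_inv {p : K × K} (h₁ : p.1 ≠ 0) (h₂ : p.2 ≠ 0) :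
    (circulantOfEigen p)⁻¹ = circulantOfEigen p⁻¹ := by
  refine inv_eq_left_inv ?_
  rw [← map_mul, ← map_one circulantOfEigen]
  exact congrArg _ (Prod.ext (inv_mul_cancel₀ h₁) (inv_mul_cancel₀ h₂))

lemma circulantOfEigen_eigenPair {X : Matrix (Fin 2) (Fin 2) K} (h₁₁ : X 1 1 = X 0 0)
    (h₁₀ : X 1 0 = X 0 1) : circulantOfEigen (eigenPair X) = X := by
  ext i j; fin_cases i <;> fin_cases j <;> simp [circulantOfEigen_apply, eigenPair, h₁₁, h₁₀]

lemma signDiagonal_mul_circulantOfEigen_mul_signDiagonal {ε : K} (hε : ε * ε = 1) (p : K × K) :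
    signDiagonal ε * circulantOfEigen p * signDiagonal ε =
      !![(p.1 + p.2) / 2, ε * (p.1 - p.2) / 2; ε * (p.1 - p.2) / 2, (p.1 + p.2) / 2] := by
  obtain ⟨s, t⟩ := p
  ext i j; fin_cases i <;> fin_cases j <;> simp [signDiagonal, circulantOfEigen_apply]
  · ring
  · ring
  · linear_combination (s + t) / 2 * hε

namespace IsSignedCirculant

variable {ε : K}

lemma eq_signDiagonal_mul {X : Matrix (Fin 2) (Fin 2) K} (hX : IsSignedCirculant ε X) :
    X = signDiagonal ε * circulantOfEigen (eigenPair X) := by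
  ext i j; fin_cases i <;> fin_cases j <;>
    simp [signDiagonal, circulantOfEigen_apply, eigenPair, hX.1, hX.2]

lemma transpose_mul (hε : ε * ε = 1) {X Y : Matrix (Fin 2) (Fin 2) K}
    (hX : IsSignedCirculant ε X) (hY : IsSignedCirculant ε Y) :
    Xᵀ * Y = circulantOfEigen (eigenPair X * eigenPair Y) := by
  conv_lhs => rw [hX.eq_signDiagonal_mul, hY.eq_signDiagonal_mul]
  rw [Matrix.transpose_mul, signDiagonal, diagonal_transpose, ← signDiagonal, mul_assoc,
    ← mul_assoc (signDiagonal ε), signDiagonal_mul_self hε, one_mul, circulantOfEigen_transpose,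
    ← map_mul]

lemma eigenPair_mul_sub_mul_eq_one (hε : ε * ε = 1) {A B C D : Matrix (Fin 2) (Fin 2) K}
    (hA : IsSignedCirculant ε A) (hB : IsSignedCirculant ε B) (hC : IsSignedCirculant ε C)
    (hD : IsSignedCirculant ε D) (h : Aᵀ * D - Cᵀ * B = 1) :
    eigenPair A * eigenPair D - eigenPair C * eigenPair B = 1 := by
  rw [hA.transpose_mul hε hD, hC.transpose_mul hε hB, ← map_sub,
    ← map_one circulantOfEigen] at h
  exact circulantOfEigen_injective h

lemma mul_add_eq {X Y Z : Matrix (Fin 2) (Fin 2) K} (hX : IsSignedCirculant ε X)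
    (hY : IsSignedCirculant ε Y) (hZ₁₁ : Z 1 1 = Z 0 0) (hZ₁₀ : Z 1 0 = Z 0 1) :
    X * Z + Y = signDiagonal ε * circulantOfEigen (eigenPair X * eigenPair Z + eigenPair Y) := by
  conv_lhs => rw [hX.eq_signDiagonal_mul, hY.eq_signDiagonal_mul,
    ← circulantOfEigen_eigenPair hZ₁₁ hZ₁₀]
  rw [mul_assoc, ← mul_add, ← map_mul, ← map_add]

lemma mul_add_mul_inv (hε : ε * ε = 1) {A B C D Z : Matrix (Fin 2) (Fin 2) K}
    (hA : IsSignedCirculant ε A) (hB : IsSignedCirculant ε B) (hC : IsSignedCirculant ε C)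
    (hD : IsSignedCirculant ε D) (hZ₁₁ : Z 1 1 = Z 0 0) (hZ₁₀ : Z 1 0 = Z 0 1)
    (hden₁ : (eigenPair C * eigenPair Z + eigenPair D).1 ≠ 0)
    (hden₂ : (eigenPair C * eigenPair Z + eigenPair D).2 ≠ 0) :
    (A * Z + B) * (C * Z + D)⁻¹ = signDiagonal ε * circulantOfEigen
      ((eigenPair A * eigenPair Z + eigenPair B) / (eigenPair C * eigenPair Z + eigenPair D)) *
        signDiagonal ε := by
  rw [hA.mul_add_eq hB hZ₁₁ hZ₁₀, hC.mul_add_eq hD hZ₁₁ hZ₁₀, mul_inv_rev,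
    inv_eq_left_inv (signDiagonal_mul_self hε), circulantOfEigen_inv hden₁ hden₂, mul_assoc,
    ← mul_assoc (circulantOfEigen _), ← map_mul, div_eq_mul_inv, mul_assoc]

end IsSignedCirculant

end Field

end Matrix

lemma isSignedCirculant_toBlocks_of_Qmat_mul {M : Mat4} {ε : ℝ} (h : Qmat * M = ε • (M * Qmat)) :
    IsSignedCirculant ε M.toBlocks₁₁ ∧ IsSignedCirculant ε M.toBlocks₁₂ ∧
      IsSignedCirculant ε M.toBlocks₂₁ ∧ IsSignedCirculant ε M.toBlocks₂₂ := by
  rw [← fromBlocks_toBlocks M, Qmat, fromBlocks_multiply, fromBlocks_multiply, fromBlocks_smul,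
    fromBlocks_inj] at h
  simp only [zero_mul, mul_zero, add_zero, zero_add] at h
  obtain ⟨h₁₁, h₁₂, h₂₁, h₂₂⟩ := h
  exact ⟨isSignedCirculant_of_swap_mul_eq h₁₁, isSignedCirculant_of_swap_mul_eq h₁₂,
    isSignedCirculant_of_swap_mul_eq h₂₁, isSignedCirculant_of_swap_mul_eq h₂₂⟩

lemma toBlocks_transpose_mul_sub_eq_one_of_mem_Omega2 {M : Mat4} (hM : M ∈ Omega2) :
    M.toBlocks₁₁ᵀ * M.toBlocks₂₂ - M.toBlocks₂₁ᵀ * M.toBlocks₁₂ = 1 := by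
  rw [Omega2, Set.mem_ofPred_eq, ← fromBlocks_toBlocks M, Jmat, fromBlocks_transpose,
    fromBlocks_multiply, fromBlocks_multiply, fromBlocks_inj] at hM
  rw [← hM.2.1]
  noncomm_ring

lemma ofReal_mul_add_ne_zero {a b c d : ℝ} (h : a * d - c * b = 1) {w : ℂ} (hw : w.im ≠ 0) :
    (c : ℂ) * w + d ≠ 0 :=
  UpperHalfPlane.linear_ne_zero_of_im (cd := ![c, d]) hw fun hcd => by
    have hc : c = 0 := congrFun hcd 0
    have hd : d = 0 := congrFun hcd 1
    simp [hc, hd] at h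

/-- for `M ∈ Ω̂₂` with `QM = εMQ`, the blocks of `M` are of the
form `[[a,b],[εb,εa]]`, the matrices `M₁, M₂` are in `SL₂(ℝ)`, and the action of
`M` on `Ĥ₂` reduces to the two linear fractional actions of `M₁` and `M₂`. -/
theorem stmt_14 (M : Mat4) (hM : M ∈ OmegaHat) (ε : ℝ) (hε : ε = 1 ∨ ε = -1)
    (hQ : Qmat * M = ε • (M * Qmat)) :
    (M.toBlocks₁₁ 1 0 = ε * M.toBlocks₁₁ 0 1 ∧ M.toBlocks₁₁ 1 1 = ε * M.toBlocks₁₁ 0 0) ∧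
    (M.toBlocks₁₂ 1 0 = ε * M.toBlocks₁₂ 0 1 ∧ M.toBlocks₁₂ 1 1 = ε * M.toBlocks₁₂ 0 0) ∧
    (M.toBlocks₂₁ 1 0 = ε * M.toBlocks₂₁ 0 1 ∧ M.toBlocks₂₁ 1 1 = ε * M.toBlocks₂₁ 0 0) ∧
    (M.toBlocks₂₂ 1 0 = ε * M.toBlocks₂₂ 0 1 ∧ M.toBlocks₂₂ 1 1 = ε * M.toBlocks₂₂ 0 0) ∧
    (!![M.toBlocks₁₁ 0 0 + M.toBlocks₁₁ 0 1, M.toBlocks₁₂ 0 0 + M.toBlocks₁₂ 0 1;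
        M.toBlocks₂₁ 0 0 + M.toBlocks₂₁ 0 1, M.toBlocks₂₂ 0 0 + M.toBlocks₂₂ 0 1] : Mat2R).det = 1 ∧
    (!![M.toBlocks₁₁ 0 0 - M.toBlocks₁₁ 0 1, M.toBlocks₁₂ 0 0 - M.toBlocks₁₂ 0 1;
        M.toBlocks₂₁ 0 0 - M.toBlocks₂₁ 0 1, M.toBlocks₂₂ 0 0 - M.toBlocks₂₂ 0 1] : Mat2R).det = 1 ∧
    ∀ Z ∈ Hhat,
      act M Z =
        !![(mob !![M.toBlocks₁₁ 0 0 + M.toBlocks₁₁ 0 1, M.toBlocks₁₂ 0 0 + M.toBlocks₁₂ 0 1;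
              M.toBlocks₂₁ 0 0 + M.toBlocks₂₁ 0 1, M.toBlocks₂₂ 0 0 + M.toBlocks₂₂ 0 1]
              (Z 0 0 + Z 0 1) +
            mob !![M.toBlocks₁₁ 0 0 - M.toBlocks₁₁ 0 1, M.toBlocks₁₂ 0 0 - M.toBlocks₁₂ 0 1;
              M.toBlocks₂₁ 0 0 - M.toBlocks₂₁ 0 1, M.toBlocks₂₂ 0 0 - M.toBlocks₂₂ 0 1]
              (Z 0 0 - Z 0 1)) / 2,
          (ε : ℂ) * (mob !![M.toBlocks₁₁ 0 0 + M.toBlocks₁₁ 0 1, M.toBlocks₁₂ 0 0 + M.toBlocks₁₂ 0 1;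
              M.toBlocks₂₁ 0 0 + M.toBlocks₂₁ 0 1, M.toBlocks₂₂ 0 0 + M.toBlocks₂₂ 0 1]
              (Z 0 0 + Z 0 1) -
            mob !![M.toBlocks₁₁ 0 0 - M.toBlocks₁₁ 0 1, M.toBlocks₁₂ 0 0 - M.toBlocks₁₂ 0 1;
              M.toBlocks₂₁ 0 0 - M.toBlocks₂₁ 0 1, M.toBlocks₂₂ 0 0 - M.toBlocks₂₂ 0 1]
              (Z 0 0 - Z 0 1)) / 2;
          (ε : ℂ) * (mob !![M.toBlocks₁₁ 0 0 + M.toBlocks₁₁ 0 1, M.toBlocks₁₂ 0 0 + M.toBlocks₁₂ 0 1;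
              M.toBlocks₂₁ 0 0 + M.toBlocks₂₁ 0 1, M.toBlocks₂₂ 0 0 + M.toBlocks₂₂ 0 1]
              (Z 0 0 + Z 0 1) -
            mob !![M.toBlocks₁₁ 0 0 - M.toBlocks₁₁ 0 1, M.toBlocks₁₂ 0 0 - M.toBlocks₁₂ 0 1;
              M.toBlocks₂₁ 0 0 - M.toBlocks₂₁ 0 1, M.toBlocks₂₂ 0 0 - M.toBlocks₂₂ 0 1]
              (Z 0 0 - Z 0 1)) / 2,
          (mob !![M.toBlocks₁₁ 0 0 + M.toBlocks₁₁ 0 1, M.toBlocks₁₂ 0 0 + M.toBlocks₁₂ 0 1;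
              M.toBlocks₂₁ 0 0 + M.toBlocks₂₁ 0 1, M.toBlocks₂₂ 0 0 + M.toBlocks₂₂ 0 1]
              (Z 0 0 + Z 0 1) +
            mob !![M.toBlocks₁₁ 0 0 - M.toBlocks₁₁ 0 1, M.toBlocks₁₂ 0 0 - M.toBlocks₁₂ 0 1;
              M.toBlocks₂₁ 0 0 - M.toBlocks₂₁ 0 1, M.toBlocks₂₂ 0 0 - M.toBlocks₂₂ 0 1]
              (Z 0 0 - Z 0 1)) / 2] := by
  have hεε : ε * ε = 1 := by rcases hε with rfl | rfl <;> norm_num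
  obtain ⟨hA, hB, hC, hD⟩ := isSignedCirculant_toBlocks_of_Qmat_mul hQ
  have hdet := hA.eigenPair_mul_sub_mul_eq_one hεε hB hC hD
    (toBlocks_transpose_mul_sub_eq_one_of_mem_Omega2 hM.1)
  simp only [Prod.ext_iff, Prod.fst_sub, Prod.snd_sub, Prod.fst_mul, Prod.snd_mul, Prod.fst_one,
    Prod.snd_one, eigenPair] at hdet
  refine ⟨hA, hB, hC, hD, ?_, ?_, fun Z ⟨hZ₁₁, hZ₁₀, hZim⟩ => ?_⟩
  · rw [det_fin_two_of]; linear_combination hdet.1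
  · rw [det_fin_two_of]; linear_combination hdet.2
  obtain ⟨hw₂, hw₁⟩ := abs_lt.mp hZim
  have hεεℂ : (ε : ℂ) * ε = 1 := by exact_mod_cast hεε
  rw [act, (hA.map ofReal_mul).mul_add_mul_inv hεεℂ (hB.map ofReal_mul) (hC.map ofReal_mul)
    (hD.map ofReal_mul) hZ₁₁ hZ₁₀,
    signDiagonal_mul_circulantOfEigen_mul_signDiagonal hεεℂ]
  · simp [eigenPair, mob]
  · simpa [eigenPair] using
      ofReal_mul_add_ne_zero hdet.1 (w := Z 0 0 + Z 0 1) (by simp; linarith)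
  · simpa [eigenPair] using
      ofReal_mul_add_ne_zero hdet.2 (w := Z 0 0 - Z 0 1) (by simp; linarith)
end
end

section
/- Let Z₁ = [[τ₁,z₁],[z₁,τ₁]] and Z₂ = [[τ₂,z₂],[z₂,τ₂]] be two points of Ĥ₂. Write τ₁+z₁ = x₁+iy₁, τ₁−z₁ = x₂+iy₂, τ₂+z₂ = u₁+iv₁, τ₂−z₂ = u₂+iv₂, and set A = (y₁² + v₁² + (x₁−u₁)²)/(y₁v₁) and B = (y₂² + v₂² + (x₂−u₂)²)/(y₂v₂). Then A ≥ 2, B ≥ 2, and the symplectic distance ρ(Z₁,Z₂) — the infimum of the symplectic lengths of piecewise continuously differentiable curves in Ĥ₂ joining Z₁ to Z₂ — equals ( log²((A+√(A²−4))/2) + log²((B+√(B²−4))/2) )^{1/2}. -/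
/-!
The substitution `w₁ = τ + z`, `w₂ = τ - z` identifies `Ĥ₂` with the product of two upper
half-planes and turns the symplectic metric into `|dw₁|² / (Im w₁)² + |dw₂|² / (Im w₂)²`, the
product of two copies of the hyperbolic plane. In these coordinates `A / 2` and `B / 2` are the
`cosh` of the hyperbolic distances `d₁`, `d₂` of the components, and
`log ((A + √(A² - 4)) / 2) = arcosh (A / 2)`.

Lower bound: the gradient of `cosh d(·, u)` has hyperbolic norm `sinh d(·, u)`, so `d(·, u)` grows
no faster than hyperbolic arc length; hence each component of a curve has length at least its
`dᵢ`, and Minkowski's inequality (over each piece, then over the pieces) combines the two.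
Upper bound: pairing constant-speed hyperbolic geodesics (vertical lines or semicircles) of the
two components gives a curve of length exactly `√(d₁² + d₂²)`.
-/

open Matrix Complex

noncomputable section

/-- The bi-symmetric matrix curve `t ↦ [[f t, g t],[g t, f t]]`. -/
def mk (f g : ℝ → ℂ) (t : ℝ) : Mat2 := !![f t, g t; g t, f t]

/-- Symplectic length of one C¹ piece of a curve in `Ĥ₂`. -/
def pieceLen (τ z τ' z' : ℝ → ℂ) (a b : ℝ) : ℝ :=
  ∫ t in a..b, Real.sqrt ((metricForm (mk τ z t) (mk τ' z' t)).re)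

/-- The set of symplectic lengths of piecewise C¹ curves in `Ĥ₂` joining the
point `[[T₁,Z₁],[Z₁,T₁]]` to the point `[[T₂,Z₂],[Z₂,T₂]]`. -/
def joinLengths (T₁ Z₁ T₂ Z₂ : ℂ) : Set ℝ :=
  {ℓ | ∃ (n : ℕ) (t : ℕ → ℝ) (τ z : ℝ → ℂ) (τ' z' : ℕ → ℝ → ℂ),
    0 < n ∧ (∀ i < n, t i < t (i + 1)) ∧
    τ (t 0) = T₁ ∧ z (t 0) = Z₁ ∧ τ (t n) = T₂ ∧ z (t n) = Z₂ ∧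
    (∀ s ∈ Set.Icc (t 0) (t n), mk τ z s ∈ Hhat) ∧
    (∀ i < n, ∀ s ∈ Set.Icc (t i) (t (i + 1)),
      HasDerivWithinAt τ (τ' i s) (Set.Icc (t i) (t (i + 1))) s ∧
      HasDerivWithinAt z (z' i s) (Set.Icc (t i) (t (i + 1))) s) ∧
    (∀ i < n, ContinuousOn (τ' i) (Set.Icc (t i) (t (i + 1))) ∧
      ContinuousOn (z' i) (Set.Icc (t i) (t (i + 1)))) ∧
    ℓ = ∑ i ∈ Finset.range n, pieceLen τ z (τ' i) (z' i) (t i) (t (i + 1))}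

open Set MeasureTheory

lemma im_add_pos_and_im_sub_pos {τ z : ℂ} (h : |z.im| < τ.im) :
    0 < (τ + z).im ∧ 0 < (τ - z).im := by
  rw [add_im, sub_im]; constructor <;> linarith [abs_lt.1 h]

lemma re_metricForm_bisym (τ z τ' z' : ℂ) (h : |z.im| < τ.im) :
    (metricForm !![τ, z; z, τ] !![τ', z'; z', τ']).re =
      (‖τ' + z'‖ / (τ + z).im) ^ 2 + (‖τ' - z'‖ / (τ - z).im) ^ 2 := by
  have hinv : (imPart !![τ, z; z, τ])⁻¹ =
      !![((τ + z).im⁻¹ + (τ - z).im⁻¹) / 2, ((τ + z).im⁻¹ - (τ - z).im⁻¹) / 2;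
        ((τ + z).im⁻¹ - (τ - z).im⁻¹) / 2, ((τ + z).im⁻¹ + (τ - z).im⁻¹) / 2] := by
    obtain ⟨hp, hm⟩ := im_add_pos_and_im_sub_pos h
    rw [add_im] at hp; rw [sub_im] at hm
    refine Matrix.inv_eq_right_inv ?_
    ext i j
    fin_cases i <;> fin_cases j <;>
      simp only [imPart, add_im, sub_im, Fin.zero_eta, Fin.mk_one, Matrix.mul_apply, map_apply,
        of_apply, cons_val', cons_val_fin_one, cons_val_zero, cons_val_one, Fin.sum_univ_two,
        one_apply_eq, one_apply_ne, ne_eq, zero_ne_one, one_ne_zero, not_false_eq_true] <;>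
      field_simp <;> ring
  rw [metricForm, hinv, div_pow, div_pow, div_eq_mul_inv (‖τ' + z'‖ ^ 2),
    div_eq_mul_inv (‖τ' - z'‖ ^ 2), ← inv_pow, ← inv_pow, Complex.sq_norm, Complex.sq_norm,
    normSq_apply, normSq_apply]
  generalize (τ + z).im⁻¹ = x, (τ - z).im⁻¹ = y
  simp only [conjM, trace_fin_two, Matrix.mul_apply, map_apply, of_apply, cons_val',
    cons_val_fin_one, cons_val_zero, cons_val_one, Fin.sum_univ_two, ofReal_div, ofReal_add,
    ofReal_sub, ofReal_ofNat, add_re, sub_re, mul_re, div_ofNat_re, ofReal_re, conj_re, add_im,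
    sub_im, mul_im, div_ofNat_im, ofReal_im, conj_im, add_zero, zero_add, zero_div, zero_mul,
    mul_zero, sub_zero, sub_self, mul_neg, sub_neg_eq_add]
  ring

lemma re_metricForm_half_add_half_sub {w₁ w₂ : ℂ} (w₁' w₂' : ℂ) (h₁ : 0 < w₁.im)
    (h₂ : 0 < w₂.im) :
    (metricForm !![(w₁ + w₂) / 2, (w₁ - w₂) / 2; (w₁ - w₂) / 2, (w₁ + w₂) / 2]
      !![(w₁' + w₂') / 2, (w₁' - w₂') / 2; (w₁' - w₂') / 2, (w₁' + w₂') / 2]).re =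
      (‖w₁'‖ / w₁.im) ^ 2 + (‖w₂'‖ / w₂.im) ^ 2 := by
  rw [re_metricForm_bisym]
  · ring_nf
  · simp only [div_ofNat_im, sub_im, add_im, abs_lt]
    constructor <;> linarith

section HyperbolicPlane

variable {p q u : ℂ}

lemma arcosh_eq_log_two_mul_add_sqrt (x : ℝ) :
    Real.arcosh x = Real.log ((2 * x + √((2 * x) ^ 2 - 4)) / 2) := by
  rw [Real.arcosh, show (2 * x) ^ 2 - 4 = 2 ^ 2 * (x ^ 2 - 1) by ring,
    Real.sqrt_mul (by norm_num), Real.sqrt_sq (by norm_num)]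
  ring_nf

/-- `cosh` of the hyperbolic distance `|dw| / Im w` on the upper half-plane
(compare `UpperHalfPlane.cosh_dist'`). -/
def hypCosh (p q : ℂ) : ℝ := (p.im ^ 2 + q.im ^ 2 + (p.re - q.re) ^ 2) / (2 * (p.im * q.im))

def hypDist (p q : ℂ) : ℝ := Real.arcosh (hypCosh p q)

lemma one_le_hypCosh (hp : 0 < p.im) (hq : 0 < q.im) : 1 ≤ hypCosh p q := by
  rw [hypCosh, le_div_iff₀ (by positivity)]
  nlinarith [sq_nonneg (p.im - q.im), sq_nonneg (p.re - q.re)]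

lemma hypCosh_self (hp : p.im ≠ 0) : hypCosh p p = 1 := by
  rw [hypCosh]; field_simp; ring

lemma hypCosh_comm (p q : ℂ) : hypCosh p q = hypCosh q p := by
  rw [hypCosh, hypCosh]; ring

lemma div_eq_two_mul_hypCosh (p q : ℂ) :
    (p.im ^ 2 + q.im ^ 2 + (p.re - q.re) ^ 2) / (p.im * q.im) = 2 * hypCosh p q := by
  rw [hypCosh]; ring

lemma hypDist_comm (p q : ℂ) : hypDist p q = hypDist q p := by
  rw [hypDist, hypDist, hypCosh_comm]

lemma hypDist_nonneg (hp : 0 < p.im) (hq : 0 < q.im) : 0 ≤ hypDist p q :=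
  Real.arcosh_nonneg (one_le_hypCosh hp hq)

lemma hypDist_eq_abs_of_hypCosh_eq {x : ℝ} (h : hypCosh p q = Real.cosh x) :
    hypDist p q = |x| := by
  rw [hypDist, h, ← Real.cosh_abs, Real.arcosh_cosh (abs_nonneg x)]

def hypCoshGrad (p u : ℂ) : ℂ :=
  ⟨(p.re - u.re) / (p.im * u.im),
    (p.im ^ 2 - u.im ^ 2 - (p.re - u.re) ^ 2) / (2 * u.im * p.im ^ 2)⟩

lemma norm_hypCoshGrad (hp : 0 < p.im) (hu : 0 < u.im) :
    ‖hypCoshGrad p u‖ = √(hypCosh p u ^ 2 - 1) / p.im := by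
  rw [Complex.norm_def, normSq_apply, ← Real.sqrt_sq hp.le, ← Real.sqrt_div' _ (by positivity)]
  congr 1
  simp only [hypCoshGrad, hypCosh]
  field_simp
  ring

lemma hasDerivWithinAt_hypCosh {w : ℝ → ℂ} {w' : ℂ} {S : Set ℝ} {s : ℝ}
    (hw : HasDerivWithinAt w w' S s) (hs : (w s).im ≠ 0) (hu : u.im ≠ 0) :
    HasDerivWithinAt (fun r => hypCosh (w r) u) (inner ℝ (hypCoshGrad (w s) u) w') S s := by
  have hre : HasDerivWithinAt (fun r => (w r).re) w'.re S s :=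
    reCLM.hasFDerivAt.comp_hasDerivWithinAt s hw
  have him : HasDerivWithinAt (fun r => (w r).im) w'.im S s :=
    imCLM.hasFDerivAt.comp_hasDerivWithinAt s hw
  have := (((him.pow 2).add_const (u.im ^ 2)).add ((hre.sub_const u.re).pow 2)).div
    ((him.mul_const u.im).const_mul 2) (by positivity)
  refine HasDerivWithinAt.congr_deriv (f := fun r => hypCosh (w r) u) this ?_
  rw [Complex.inner]
  simp only [hypCoshGrad, mul_re, conj_re, conj_im, Pi.add_apply, Pi.pow_apply]
  field_simp
  ring

end HyperbolicPlane

section LowerBound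

variable {u : ℂ} {w : ℝ → ℂ}

lemma tendsto_arcosh_add {x : ℝ} (hx : 1 ≤ x) :
    Filter.Tendsto (fun δ => Real.arcosh (x + δ)) (nhdsWithin 0 (Ioi 0))
      (nhds (Real.arcosh x)) := by
  refine (Real.continuousOn_arcosh x hx).tendsto.comp
    (tendsto_nhdsWithin_of_tendsto_nhds_of_eventually_within _ ?_ ?_)
  · exact ((continuous_const_add x).tendsto' 0 x (add_zero x)).mono_left nhdsWithin_le_nhds
  · filter_upwards [self_mem_nhdsWithin] with δ (hδ : 0 < δ)
    exact mem_Ici.2 (by linarith)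

/-- The shift by `δ > 0` keeps `arcosh` away from its singular point `1`. -/
lemma arcosh_hypCosh_add_sub_le_integral {a b δ : ℝ} {w' : ℝ → ℂ} (hab : a ≤ b)
    (hu : 0 < u.im) (hδ : 0 < δ) (hw : ∀ s ∈ Icc a b, HasDerivWithinAt w (w' s) (Icc a b) s)
    (hw' : ContinuousOn w' (Icc a b)) (him : ∀ s ∈ Icc a b, 0 < (w s).im) :
    Real.arcosh (hypCosh (w b) u + δ) - Real.arcosh (hypCosh (w a) u + δ) ≤
      ∫ s in a..b, ‖w' s‖ / (w s).im := by
  have hφ : ∀ s ∈ Icc a b, HasDerivWithinAt (fun r => Real.arcosh (hypCosh (w r) u + δ))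
      ((√((hypCosh (w s) u + δ) ^ 2 - 1))⁻¹ * inner ℝ (hypCoshGrad (w s) u) (w' s))
      (Icc a b) s := by
    intro s hs
    have h1 : 1 < hypCosh (w s) u + δ := by linarith [one_le_hypCosh (him s hs) hu]
    exact (Real.hasDerivAt_arcosh h1).comp_hasDerivWithinAt (h₂ := Real.arcosh) s
      ((hasDerivWithinAt_hypCosh (hw s hs) (him s hs).ne' hu.ne').add_const δ)
  have hwc : ContinuousOn w (Icc a b) := fun s hs => (hw s hs).continuousWithinAt
  refine intervalIntegral.sub_le_integral_of_hasDeriv_right_of_le hab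
    (fun s hs => (hφ s hs).continuousWithinAt)
    (fun s hs => ((hφ s (Ioo_subset_Icc_self hs)).hasDerivAt
      (Icc_mem_nhds hs.1 hs.2)).hasDerivWithinAt)
    ((continuous_norm.comp_continuousOn hw').div (continuous_im.comp_continuousOn hwc)
      fun s hs => (him s hs).ne').integrableOn_Icc
    fun s hs => ?_
  replace hs := Ioo_subset_Icc_self hs
  have hG := one_le_hypCosh (him s hs) hu
  have hpos : 0 < √((hypCosh (w s) u + δ) ^ 2 - 1) := Real.sqrt_pos.2 (by nlinarith)
  calc _ ≤ (√((hypCosh (w s) u + δ) ^ 2 - 1))⁻¹ * (‖hypCoshGrad (w s) u‖ * ‖w' s‖) :=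
        mul_le_mul_of_nonneg_left ((le_abs_self _).trans (abs_real_inner_le_norm _ _))
          (inv_nonneg.2 hpos.le)
    _ = √(hypCosh (w s) u ^ 2 - 1) / √((hypCosh (w s) u + δ) ^ 2 - 1) *
          (‖w' s‖ / (w s).im) := by
        rw [norm_hypCoshGrad (him s hs) hu]; ring
    _ ≤ 1 * (‖w' s‖ / (w s).im) := by
        gcongr
        · exact div_nonneg (norm_nonneg _) (him s hs).le
        · exact div_le_one_of_le₀ (Real.sqrt_le_sqrt (by nlinarith)) hpos.le
    _ = ‖w' s‖ / (w s).im := one_mul _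

lemma monotoneOn_Iic_of_le_succ {n : ℕ} {t : ℕ → ℝ} (ht : ∀ i < n, t i ≤ t (i + 1)) :
    MonotoneOn t (Iic n) := by
  intro j _ k hk hjk
  induction k, hjk using Nat.le_induction with
  | base => rfl
  | succ k _ ih => exact (ih (by grind)).trans (ht k (by grind))

lemma Icc_subset_Icc_of_le_succ {n i : ℕ} {t : ℕ → ℝ} (ht : ∀ j < n, t j ≤ t (j + 1))
    (hi : i < n) : Icc (t i) (t (i + 1)) ⊆ Icc (t 0) (t n) :=
  Icc_subset_Icc (monotoneOn_Iic_of_le_succ ht (by simp) (by grind) (Nat.zero_le i))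
    (monotoneOn_Iic_of_le_succ ht (by grind) (by simp) hi)

lemma hypDist_le_sum_integral {n : ℕ} {t : ℕ → ℝ} {w' : ℕ → ℝ → ℂ}
    (ht : ∀ i < n, t i ≤ t (i + 1))
    (hw : ∀ i < n, ∀ s ∈ Icc (t i) (t (i + 1)),
      HasDerivWithinAt w (w' i s) (Icc (t i) (t (i + 1))) s)
    (hw' : ∀ i < n, ContinuousOn (w' i) (Icc (t i) (t (i + 1))))
    (him : ∀ s ∈ Icc (t 0) (t n), 0 < (w s).im) :
    hypDist (w (t 0)) (w (t n)) ≤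
      ∑ i ∈ Finset.range n, ∫ s in t i..t (i + 1), ‖w' i s‖ / (w s).im := by
  set u := w (t 0)
  have htn : t 0 ≤ t n := monotoneOn_Iic_of_le_succ ht (by simp) (by simp) (Nat.zero_le n)
  have hu : 0 < u.im := him _ (left_mem_Icc.2 htn)
  have hshift : ∀ δ > 0, Real.arcosh (hypCosh (w (t n)) u + δ) - Real.arcosh (1 + δ) ≤
      ∑ i ∈ Finset.range n, ∫ s in t i..t (i + 1), ‖w' i s‖ / (w s).im := by
    intro δ hδ
    have := Finset.sum_le_sum fun i (hi : i ∈ Finset.range n) =>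
      have hi := Finset.mem_range.1 hi
      arcosh_hypCosh_add_sub_le_integral (ht i hi) hu hδ (hw i hi) (hw' i hi)
        fun s hs => him s (Icc_subset_Icc_of_le_succ ht hi hs)
    rwa [Finset.sum_range_sub (fun i => Real.arcosh (hypCosh (w (t i)) u + δ)),
      hypCosh_self hu.ne'] at this
  have hlim := (tendsto_arcosh_add (one_le_hypCosh (him _ (right_mem_Icc.2 htn)) hu)).sub
    (tendsto_arcosh_add le_rfl)
  rw [Real.arcosh_zero, sub_zero] at hlim
  rw [hypDist_comm]
  exact le_of_tendsto hlim (eventually_nhdsWithin_of_forall hshift)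

lemma sqrt_sq_add_sq_sum_le {ι : Type*} (s : Finset ι) (f g : ι → ℝ) :
    √((∑ i ∈ s, f i) ^ 2 + (∑ i ∈ s, g i) ^ 2) ≤ ∑ i ∈ s, √(f i ^ 2 + g i ^ 2) := by
  simp only [← norm_add_mul_I]
  push_cast
  rw [Finset.sum_mul, ← Finset.sum_add_distrib]
  exact norm_sum_le _ _

lemma sqrt_sq_add_sq_integral_le {f g : ℝ → ℝ} {a b : ℝ} (hab : a ≤ b)
    (hf : IntervalIntegrable f volume a b) (hg : IntervalIntegrable g volume a b) :
    √((∫ s in a..b, f s) ^ 2 + (∫ s in a..b, g s) ^ 2) ≤ ∫ s in a..b, √(f s ^ 2 + g s ^ 2) := by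
  simp only [← norm_add_mul_I]
  have hf' : IntervalIntegrable (fun s => (f s : ℂ)) volume a b := ⟨hf.1.ofReal, hf.2.ofReal⟩
  have hg' : IntervalIntegrable (fun s => (g s : ℂ)) volume a b := ⟨hg.1.ofReal, hg.2.ofReal⟩
  rw [← intervalIntegral.integral_ofReal, ← intervalIntegral.integral_ofReal,
    ← intervalIntegral.integral_mul_const, ← intervalIntegral.integral_add hf' (hg'.mul_const I)]
  exact intervalIntegral.norm_integral_le_integral_norm hab

lemma sqrt_sq_add_sq_integral_le_pieceLen {τ z τ' z' : ℝ → ℂ} {a b : ℝ} (hab : a ≤ b)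
    (hH : ∀ s ∈ Icc a b, |(z s).im| < (τ s).im)
    (hτ : ∀ s ∈ Icc a b, HasDerivWithinAt τ (τ' s) (Icc a b) s)
    (hz : ∀ s ∈ Icc a b, HasDerivWithinAt z (z' s) (Icc a b) s)
    (hτ' : ContinuousOn τ' (Icc a b)) (hz' : ContinuousOn z' (Icc a b)) :
    √((∫ s in a..b, ‖τ' s + z' s‖ / (τ s + z s).im) ^ 2 +
        (∫ s in a..b, ‖τ' s - z' s‖ / (τ s - z s).im) ^ 2) ≤ pieceLen τ z τ' z' a b := by
  have hτc : ContinuousOn τ (Icc a b) := fun s hs => (hτ s hs).continuousWithinAt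
  have hzc : ContinuousOn z (Icc a b) := fun s hs => (hz s hs).continuousWithinAt
  have hform : EqOn (fun s => √((metricForm (_root_.mk τ z s) (_root_.mk τ' z' s)).re))
      (fun s => √((‖τ' s + z' s‖ / (τ s + z s).im) ^ 2 + (‖τ' s - z' s‖ / (τ s - z s).im) ^ 2))
      (uIcc a b) := fun s hs => by
    rw [uIcc_of_le hab] at hs
    simp only [_root_.mk, re_metricForm_bisym _ _ _ _ (hH s hs)]
  rw [pieceLen, intervalIntegral.integral_congr hform]
  refine sqrt_sq_add_sq_integral_le hab ?_ ?_
  · exact ((continuous_norm.comp_continuousOn (hτ'.add hz')).div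
      (continuous_im.comp_continuousOn (hτc.add hzc))
      fun s hs => (im_add_pos_and_im_sub_pos (hH s hs)).1.ne').intervalIntegrable_of_Icc hab
  · exact ((continuous_norm.comp_continuousOn (hτ'.sub hz')).div
      (continuous_im.comp_continuousOn (hτc.sub hzc))
      fun s hs => (im_add_pos_and_im_sub_pos (hH s hs)).2.ne').intervalIntegrable_of_Icc hab

lemma sqrt_hypDist_sq_add_le_of_mem_joinLengths {τ₁ z₁ τ₂ z₂ : ℂ} {ℓ : ℝ}
    (hℓ : ℓ ∈ joinLengths τ₁ z₁ τ₂ z₂) :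
    √(hypDist (τ₁ + z₁) (τ₂ + z₂) ^ 2 + hypDist (τ₁ - z₁) (τ₂ - z₂) ^ 2) ≤ ℓ := by
  obtain ⟨n, t, τ, z, τ', z', -, ht, rfl, rfl, rfl, rfl, hH, hder, hcont, rfl⟩ := hℓ
  replace ht : ∀ i < n, t i ≤ t (i + 1) := fun i hi => (ht i hi).le
  replace hH : ∀ s ∈ Icc (t 0) (t n), |(z s).im| < (τ s).im := fun s hs => (hH s hs).2.2
  have hpos := fun s hs => im_add_pos_and_im_sub_pos (hH s hs)
  have htn : t 0 ≤ t n := monotoneOn_Iic_of_le_succ ht (by simp) (by simp) (Nat.zero_le n)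
  have hd₁ := hypDist_le_sum_integral (w := fun s => τ s + z s) ht
    (fun i hi s hs => (hder i hi s hs).1.add (hder i hi s hs).2)
    (fun i hi => (hcont i hi).1.add (hcont i hi).2) fun s hs => (hpos s hs).1
  have hd₂ := hypDist_le_sum_integral (w := fun s => τ s - z s) ht
    (fun i hi s hs => (hder i hi s hs).1.sub (hder i hi s hs).2)
    (fun i hi => (hcont i hi).1.sub (hcont i hi).2) fun s hs => (hpos s hs).2
  calc _ ≤ √((∑ i ∈ Finset.range n,
              ∫ s in t i..t (i + 1), ‖τ' i s + z' i s‖ / (τ s + z s).im) ^ 2 +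
            (∑ i ∈ Finset.range n,
              ∫ s in t i..t (i + 1), ‖τ' i s - z' i s‖ / (τ s - z s).im) ^ 2) := by
        gcongr
        · exact hypDist_nonneg (hpos _ (left_mem_Icc.2 htn)).1 (hpos _ (right_mem_Icc.2 htn)).1
        · exact hypDist_nonneg (hpos _ (left_mem_Icc.2 htn)).2 (hpos _ (right_mem_Icc.2 htn)).2
    _ ≤ _ := sqrt_sq_add_sq_sum_le _ _ _
    _ ≤ _ := Finset.sum_le_sum fun i hi => by
        have hi := Finset.mem_range.1 hi
        have hsub := Icc_subset_Icc_of_le_succ ht hi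
        exact sqrt_sq_add_sq_integral_le_pieceLen (ht i hi) (fun s hs => hH s (hsub hs))
          (fun s hs => (hder i hi s hs).1) (fun s hs => (hder i hi s hs).2) (hcont i hi).1
          (hcont i hi).2

end LowerBound

section UpperBound

variable {p q z : ℂ}

structure HasConstHypSpeed (γ γ' : ℝ → ℂ) (d : ℝ) : Prop where
  im_pos : ∀ t, 0 < (γ t).im
  hasDerivAt : ∀ t, HasDerivAt γ (γ' t) t
  continuous_deriv : Continuous γ'
  norm_deriv : ∀ t, ‖γ' t‖ = d * (γ t).im

lemma HasConstHypSpeed.affine {g g' : ℝ → ℂ} (hg : HasConstHypSpeed g g' 1) (c : ℝ) {r : ℝ}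
    (hr : 0 < r) (α β : ℝ) :
    HasConstHypSpeed (fun t => c + r * g (α + (β - α) * t))
      (fun t => r * ((β - α) • g' (α + (β - α) * t))) |β - α| where
  im_pos t := by simpa using mul_pos hr (hg.im_pos _)
  hasDerivAt t := by
    have hθ : HasDerivAt (fun t : ℝ => α + (β - α) * t) (β - α) t := by
      simpa using ((hasDerivAt_id t).const_mul (β - α)).const_add α
    exact (((hg.hasDerivAt _).scomp t hθ).const_mul (r : ℂ)).const_add (c : ℂ)
  continuous_deriv := by
    have := hg.continuous_deriv
    fun_prop
  norm_deriv t := by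
    rw [norm_mul, norm_smul, hg.norm_deriv, norm_real, Real.norm_eq_abs, Real.norm_eq_abs,
      abs_of_pos hr]
    simp only [one_mul, add_im, ofReal_im, mul_im, ofReal_re, zero_mul, add_zero, zero_add]
    ring

lemma hasConstHypSpeed_vertical :
    HasConstHypSpeed (fun s => Real.exp s * I) (fun s => Real.exp s * I) 1 where
  im_pos s := by simpa [-ofReal_exp] using Real.exp_pos s
  hasDerivAt s := (Real.hasDerivAt_exp s).ofReal_comp.mul_const I
  continuous_deriv := by fun_prop
  norm_deriv s := by simp [-ofReal_exp, abs_of_pos (Real.exp_pos s)]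

lemma hasConstHypSpeed_circle :
    HasConstHypSpeed (fun s => (Real.sinh s + I) / Real.cosh s)
      (fun s => (1 - Real.sinh s * I) / Real.cosh s ^ 2) 1 where
  im_pos s := by
    have := Real.cosh_pos s
    simp only [div_im, add_im, ofReal_im, I_im, zero_add, ofReal_re, one_mul, normSq_ofReal,
      div_self_mul_self', add_re, I_re, add_zero, mul_zero, zero_div, sub_zero, inv_pos]
    positivity
  hasDerivAt s := by
    have := ((Real.hasDerivAt_sinh s).ofReal_comp.add_const I).div
      (Real.hasDerivAt_cosh s).ofReal_comp (by exact_mod_cast (Real.cosh_pos s).ne')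
    refine this.congr_deriv ?_
    have h : ((Real.cosh s : ℂ)) ^ 2 - (Real.sinh s : ℂ) ^ 2 = 1 := by
      exact_mod_cast Real.cosh_sq_sub_sinh_sq s
    congr 1
    linear_combination h
  continuous_deriv := by
    refine Continuous.div (by fun_prop) (by fun_prop) fun s => ?_
    exact_mod_cast (pow_pos (Real.cosh_pos s) 2).ne'
  norm_deriv s := by
    have hc := Real.cosh_pos s
    have h : ‖1 - (Real.sinh s : ℂ) * I‖ = Real.cosh s := by
      rw [sub_eq_add_neg, ← neg_mul, ← ofReal_neg, ← ofReal_one, norm_add_mul_I]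
      simp [← Real.cosh_sq', Real.sqrt_sq hc.le]
    simp only [Complex.norm_div, h, norm_pow, norm_real, Real.norm_eq_abs, sq_abs, div_im,
      add_im, ofReal_im, I_im, zero_add, ofReal_re, one_mul, normSq_ofReal, div_self_mul_self',
      add_re, I_re, add_zero, mul_zero, zero_div, sub_zero]
    field_simp

lemma hypCosh_of_re_eq (hp : 0 < p.im) (hq : 0 < q.im) (h : p.re = q.re) :
    hypCosh p q = Real.cosh (Real.log q.im - Real.log p.im) := by
  rw [← Real.log_div hq.ne' hp.ne', Real.cosh_log (div_pos hq hp), hypCosh, h, sub_self]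
  field_simp
  ring

lemma cosh_arsinh_re_sub_div_im (hz : 0 < z.im) (c : ℝ) :
    Real.cosh (Real.arsinh ((z.re - c) / z.im)) = ‖z - c‖ / z.im := by
  rw [Real.cosh_arsinh, eq_div_iff hz.ne', ← Real.sqrt_sq hz.le, ← Real.sqrt_mul (by positivity),
    Real.sqrt_sq hz.le, Complex.norm_def, normSq_apply]
  congr 1
  simp only [sub_re, ofReal_re, sub_im, ofReal_im, sub_zero]
  field_simp
  ring

lemma ofReal_add_norm_sub_mul_circle (hz : 0 < z.im) (c : ℝ) :
    (c : ℂ) + ‖z - c‖ * ((Real.sinh (Real.arsinh ((z.re - c) / z.im)) + I) /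
      Real.cosh (Real.arsinh ((z.re - c) / z.im))) = z := by
  have hn : ‖z - c‖ ≠ 0 := norm_ne_zero_iff.2 fun h => by simpa [sub_eq_zero.1 h] using hz.ne'
  rw [Real.sinh_arsinh, cosh_arsinh_re_sub_div_im hz c]
  push_cast
  field_simp
  apply Complex.ext <;>
    simp only [add_re, add_im, sub_re, sub_im, mul_re, mul_im, div_ofReal_re, div_ofReal_im,
      ofReal_re, ofReal_im, I_re, I_im, mul_zero, zero_mul, mul_one, sub_zero, add_zero, zero_add,
      sub_self, zero_div] <;>
    field_simp
  ring

lemma hypCosh_eq_cosh_of_norm_sub_eq (hp : 0 < p.im) (hq : 0 < q.im) {c : ℝ}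
    (h : ‖p - c‖ = ‖q - c‖) :
    hypCosh p q =
      Real.cosh (Real.arsinh ((q.re - c) / q.im) - Real.arsinh ((p.re - c) / p.im)) := by
  rw [Real.cosh_sub, cosh_arsinh_re_sub_div_im hp, cosh_arsinh_re_sub_div_im hq, Real.sinh_arsinh,
    Real.sinh_arsinh, ← h]
  have hsq (w : ℂ) : ‖w - c‖ ^ 2 = (w.re - c) ^ 2 + w.im ^ 2 := by
    simp only [Complex.sq_norm, normSq_apply, sub_re, ofReal_re, sub_im, ofReal_im, sub_zero]; ring
  have hq' := hsq q
  rw [← h] at hq'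
  rw [hypCosh]
  field_simp
  linear_combination -(hsq p + hq')

lemma exists_norm_sub_ofReal_eq (h : p.re ≠ q.re) : ∃ c : ℝ, ‖p - c‖ = ‖q - c‖ := by
  set c := (normSq p - normSq q) / (2 * (p.re - q.re)) with hc
  have hc' : 2 * (p.re - q.re) * c = normSq p - normSq q := by
    rw [hc]; field_simp [sub_ne_zero.2 h]
  refine ⟨c, ?_⟩
  rw [← sq_eq_sq₀ (norm_nonneg _) (norm_nonneg _), Complex.sq_norm, Complex.sq_norm]
  simp only [normSq_apply, sub_re, sub_im, ofReal_re, ofReal_im, sub_zero] at hc' ⊢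
  linear_combination -hc'

lemma exists_hasConstHypSpeed (hp : 0 < p.im) (hq : 0 < q.im) :
    ∃ γ γ' : ℝ → ℂ, γ 0 = p ∧ γ 1 = q ∧ HasConstHypSpeed γ γ' (hypDist p q) := by
  by_cases h : p.re = q.re
  · rw [hypDist_eq_abs_of_hypCosh_eq (hypCosh_of_re_eq hp hq h)]
    refine ⟨_, _, ?_, ?_, hasConstHypSpeed_vertical.affine p.re one_pos _ _⟩
    · apply Complex.ext <;> simp [-ofReal_exp, Real.exp_log hp]
    · apply Complex.ext <;> simp [-ofReal_exp, Real.exp_log hq, h]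
  · obtain ⟨c, hc⟩ := exists_norm_sub_ofReal_eq h
    rw [hypDist_eq_abs_of_hypCosh_eq (hypCosh_eq_cosh_of_norm_sub_eq hp hq hc)]
    refine ⟨_, _, ?_, ?_, hasConstHypSpeed_circle.affine c (r := ‖p - c‖) ?_ _ _⟩
    · simpa using ofReal_add_norm_sub_mul_circle hp c
    · simpa [hc] using ofReal_add_norm_sub_mul_circle hq c
    · exact norm_pos_iff.2 fun h => by simpa [sub_eq_zero.1 h] using hp.ne'

lemma sqrt_hypDist_sq_add_mem_joinLengths {τ₁ z₁ τ₂ z₂ : ℂ} (h₁ : |z₁.im| < τ₁.im)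
    (h₂ : |z₂.im| < τ₂.im) :
    √(hypDist (τ₁ + z₁) (τ₂ + z₂) ^ 2 + hypDist (τ₁ - z₁) (τ₂ - z₂) ^ 2) ∈
      joinLengths τ₁ z₁ τ₂ z₂ := by
  obtain ⟨hp₁, hm₁⟩ := im_add_pos_and_im_sub_pos h₁
  obtain ⟨hp₂, hm₂⟩ := im_add_pos_and_im_sub_pos h₂
  obtain ⟨γ₁, γ₁', hγ₁0, hγ₁1, hγ₁⟩ := exists_hasConstHypSpeed hp₁ hp₂
  obtain ⟨γ₂, γ₂', hγ₂0, hγ₂1, hγ₂⟩ := exists_hasConstHypSpeed hm₁ hm₂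
  refine ⟨1, fun i => i, fun s => (γ₁ s + γ₂ s) / 2, fun s => (γ₁ s - γ₂ s) / 2,
    fun _ s => (γ₁' s + γ₂' s) / 2, fun _ s => (γ₁' s - γ₂' s) / 2, one_pos, by simp,
    by simp [hγ₁0, hγ₂0], by simp [hγ₁0, hγ₂0], by simp [hγ₁1, hγ₂1], by simp [hγ₁1, hγ₂1],
    fun s _ => ?_, fun _ _ s _ => ⟨?_, ?_⟩, fun _ _ => ⟨?_, ?_⟩, ?_⟩
  · have := hγ₁.im_pos s
    have := hγ₂.im_pos s
    refine ⟨rfl, rfl, ?_⟩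
    simp only [_root_.mk, of_apply, cons_val', cons_val_one, cons_val_fin_one, cons_val_zero,
      div_ofNat_im, sub_im, add_im, abs_lt]
    constructor <;> linarith
  · exact (((hγ₁.hasDerivAt s).add (hγ₂.hasDerivAt s)).div_const 2).hasDerivWithinAt
  · exact (((hγ₁.hasDerivAt s).sub (hγ₂.hasDerivAt s)).div_const 2).hasDerivWithinAt
  · exact ((hγ₁.continuous_deriv.add hγ₂.continuous_deriv).div_const 2).continuousOn
  · exact ((hγ₁.continuous_deriv.sub hγ₂.continuous_deriv).div_const 2).continuousOn
  · have hlen : ∀ s, √((metricForm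
          (_root_.mk (fun s => (γ₁ s + γ₂ s) / 2) (fun s => (γ₁ s - γ₂ s) / 2) s)
          (_root_.mk (fun s => (γ₁' s + γ₂' s) / 2) (fun s => (γ₁' s - γ₂' s) / 2) s)).re) =
        √(hypDist (τ₁ + z₁) (τ₂ + z₂) ^ 2 + hypDist (τ₁ - z₁) (τ₂ - z₂) ^ 2) := fun s => by
      rw [_root_.mk, _root_.mk, re_metricForm_half_add_half_sub _ _ (hγ₁.im_pos s) (hγ₂.im_pos s),
        hγ₁.norm_deriv, hγ₂.norm_deriv, mul_div_cancel_right₀ _ (hγ₁.im_pos s).ne',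
        mul_div_cancel_right₀ _ (hγ₂.im_pos s).ne']
    simp [pieceLen, hlen]

end UpperBound

/-- the explicit formula for the symplectic distance between two
points `Z₁ = [[τ₁,z₁],[z₁,τ₁]]` and `Z₂ = [[τ₂,z₂],[z₂,τ₂]]` of `Ĥ₂`. -/
theorem stmt_18 (τ₁ z₁ τ₂ z₂ : ℂ)
    (h₁ : |z₁.im| < τ₁.im) (h₂ : |z₂.im| < τ₂.im) :
    2 ≤ ((τ₁ + z₁).im ^ 2 + (τ₂ + z₂).im ^ 2 + ((τ₁ + z₁).re - (τ₂ + z₂).re) ^ 2) /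
        ((τ₁ + z₁).im * (τ₂ + z₂).im) ∧
    2 ≤ ((τ₁ - z₁).im ^ 2 + (τ₂ - z₂).im ^ 2 + ((τ₁ - z₁).re - (τ₂ - z₂).re) ^ 2) /
        ((τ₁ - z₁).im * (τ₂ - z₂).im) ∧
    sInf (joinLengths τ₁ z₁ τ₂ z₂) =
      Real.sqrt
        (Real.log ((((τ₁ + z₁).im ^ 2 + (τ₂ + z₂).im ^ 2 +
              ((τ₁ + z₁).re - (τ₂ + z₂).re) ^ 2) / ((τ₁ + z₁).im * (τ₂ + z₂).im) +
            Real.sqrt ((((τ₁ + z₁).im ^ 2 + (τ₂ + z₂).im ^ 2 +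
              ((τ₁ + z₁).re - (τ₂ + z₂).re) ^ 2) / ((τ₁ + z₁).im * (τ₂ + z₂).im)) ^ 2 - 4)) / 2) ^ 2 +
         Real.log ((((τ₁ - z₁).im ^ 2 + (τ₂ - z₂).im ^ 2 +
              ((τ₁ - z₁).re - (τ₂ - z₂).re) ^ 2) / ((τ₁ - z₁).im * (τ₂ - z₂).im) +
            Real.sqrt ((((τ₁ - z₁).im ^ 2 + (τ₂ - z₂).im ^ 2 +
              ((τ₁ - z₁).re - (τ₂ - z₂).re) ^ 2) / ((τ₁ - z₁).im * (τ₂ - z₂).im)) ^ 2 - 4)) / 2) ^ 2) := by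
  obtain ⟨hp₁, hm₁⟩ := im_add_pos_and_im_sub_pos h₁
  obtain ⟨hp₂, hm₂⟩ := im_add_pos_and_im_sub_pos h₂
  simp only [div_eq_two_mul_hypCosh, ← arcosh_eq_log_two_mul_add_sqrt]
  refine ⟨by linarith [one_le_hypCosh hp₁ hp₂], by linarith [one_le_hypCosh hm₁ hm₂], ?_⟩
  exact IsLeast.csInf_eq ⟨sqrt_hypDist_sq_add_mem_joinLengths h₁ h₂,
    fun ℓ hℓ => sqrt_hypDist_sq_add_le_of_mem_joinLengths hℓ⟩
end
end
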